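/- arXiv:2509.04231 — 6 statements merged into one kernel-verified Lean document; each statement's English description precedes it below -/
import Mathlib

section
/- Finite-sample validity of SENS (Corollary 1). Let (Ω, 𝓕, ℙ) be a probability space, m ≥ 1, H₀ ⊆ [m], α ∈ (0,1). Let U = (U_1,…,U_m) and U⁰ = (U_1⁰,…,U_m⁰) be strictly positive real random vectors such that (i) for every i ∈ H₀ the joint law of (U, U⁰) on ℝ^m × ℝ^m is invariant under swapping U_i and U_i⁰ (pairwise exchangeability under the null), and (ii) ℙ(U_i = U_i⁰) = 0 for every i ∈ [m] (no ties almost surely). Define G_i = sign(U_i⁰ − U_i)·max(exp(−U_i), exp(−U_i⁰)), τ = inf{ λ ∈ {|G_1|,…,|G_m|} : (1 + Σ_j 1{G_j ≤ −λ}) / max(Σ_j 1{G_j ≥ λ}, 1) ≤ α } (τ = +∞ if the set is empty), e_i = m·1{G_i ≥ τ}/(1 + Σ_j 1{G_j ≤ −τ}) (e_i = 0 when τ = +∞), and R = { i : G_i ≥ τ }. Then: (a) E[ Σ_{i∈H₀} e_i ] ≤ m (the e_i are exact generalized e-values); and (b) the rejection set R controls the false discovery rate: E[ |R ∩ H₀|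 / max(|R|, 1) ] ≤ α. -/
open MeasureTheory
open scoped Classical

/-- Swap the coordinates indexed by `J` between the two vectors of a pair. -/
def swapSet {m : ℕ} (J : Finset (Fin m)) (p : (Fin m → ℝ) × (Fin m → ℝ)) :
    (Fin m → ℝ) × (Fin m → ℝ) :=
  (fun j => if j ∈ J then p.2 j else p.1 j, fun j => if j ∈ J then p.1 j else p.2 j)

/-- The mirror threshold `τ`: the infimum (in the extended reals, `+∞` when the set is
empty) of the values `λ ∈ {|G 1|, …, |G m|}` at which the mirror FDP estimate
`(1 + #{j : G j ≤ −λ}) / max(#{j : G j ≥ λ}, 1)` is at most `α`. -/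
noncomputable def mirrorThreshold {m : ℕ} (α : ℝ) (G : Fin m → ℝ) : EReal :=
  sInf ((fun x : ℝ => (x : EReal)) ''
    {x : ℝ | (∃ i, |G i| = x) ∧
      ((1 : ℝ) + ((Finset.univ.filter fun j => G j ≤ -x).card : ℝ)) /
        max ((Finset.univ.filter fun j => x ≤ G j).card : ℝ) 1 ≤ α})

/-- The mirror e-values `e i = m·1{G i ≥ τ}/(1 + #{j : G j ≤ −τ})`; when `τ = +∞` the
indicator vanishes, so `e i = 0`. -/
noncomputable def mirrorEValue {m : ℕ} (α : ℝ) (G : Fin m → ℝ) (i : Fin m) : ℝ :=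
  (m : ℝ) * (if mirrorThreshold α G ≤ (G i : EReal) then (1 : ℝ) else 0) /
    ((1 : ℝ) + ((Finset.univ.filter fun j =>
        (G j : EReal) ≤ -(mirrorThreshold α G)).card : ℝ))

/-- The mirror (SENS) rejection set `R = { i : G i ≥ τ }`. -/
noncomputable def mirrorRejection {m : ℕ} (α : ℝ) (G : Fin m → ℝ) : Finset (Fin m) :=
  Finset.univ.filter fun i => mirrorThreshold α G ≤ (G i : EReal)


section SensAux
open Finset
open scoped symmDiff

lemma nat_choose_id (n p : ℕ) :
    ((n+1).choose p) * (n+1-p) = (n+1) * n.choose p := by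
  have h2 := Nat.add_one_mul_choose_eq n p
  have h1 := Nat.choose_succ_right_eq (n+1) p
  rw [← h1]
  simpa using h2.symm

lemma bc_step (k q : ℕ) :
    (k.choose (q+1) : ℝ) * (q+1) / ((k:ℝ) - q) + (k.choose q : ℝ) * q / (1 + (k:ℝ) - q)
      ≤ ((k+1).choose (q+1) : ℝ) * (q+1) / (1 + (k:ℝ) - q) := by
  rcases lt_trichotomy q k with h | h | h
  · have hkq : (0:ℝ) < (k:ℝ) - q := by
      have : (q:ℝ) < k := by exact_mod_cast h
      linarith
    have hkq1 : (0:ℝ) < 1 + (k:ℝ) - q := by linarith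
    have e1 : (k.choose (q+1) : ℝ) * (q+1) = (k.choose q : ℝ) * ((k:ℝ) - q) := by
      have h' : ((k.choose (q+1)) * (q+1) : ℕ) = (k.choose q) * (k - q) :=
        Nat.choose_succ_right_eq k q
      have h'' : ((k.choose (q+1)) * (q+1) : ℝ) = (((k.choose q) * (k - q) : ℕ) : ℝ) := by
        exact_mod_cast congrArg (Nat.cast (R := ℝ)) h'
      rw [h'']
      push_cast [Nat.cast_sub h.le]
      ring
    have e2 : ((k+1).choose (q+1) : ℝ) * (q+1) = ((k:ℝ)+1) * k.choose q := by
      have h' : ((k+1) * k.choose q : ℕ) = (k+1).choose (q+1) * (q+1) :=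
        Nat.add_one_mul_choose_eq k q
      exact_mod_cast (congrArg (Nat.cast (R := ℝ)) h').symm
    rw [e1, e2, mul_div_assoc, div_self (ne_of_gt hkq)]
    rw [le_div_iff₀ hkq1]
    field_simp
    nlinarith [(k.choose q).cast_nonneg (α := ℝ)]
  · subst h
    simp [Nat.choose_succ_self, Nat.choose_self]
  · have c1 : k.choose (q+1) = 0 := Nat.choose_eq_zero_of_lt (by omega)
    have c2 : k.choose q = 0 := Nat.choose_eq_zero_of_lt h
    have c3 : (k+1).choose (q+1) = 0 := Nat.choose_eq_zero_of_lt (by omega)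
    simp [c1, c2, c3]

lemma sum_phi (n : ℕ) :
    ∑ p ∈ range (n+1), (n.choose p : ℝ) * p / (1 + (n:ℝ) - p) ≤ 2^n := by
  have hterm : ∀ p ∈ range (n+1),
      (n.choose p : ℝ) * p / (1 + (n:ℝ) - p) = (p : ℝ) * ((n+1).choose p) / (n+1) := by
    intro p hp
    rw [mem_range] at hp
    have hp' : p ≤ n := by omega
    have hden : (1 + (n:ℝ) - p) = ((n+1-p : ℕ) : ℝ) := by
      push_cast [Nat.cast_sub (by omega : p ≤ n+1)]; ring
    have hpos : (0:ℝ) < ((n+1-p : ℕ) : ℝ) := by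
      have : 0 < n+1-p := by omega
      exact_mod_cast this
    rw [hden, div_eq_div_iff hpos.ne' (by positivity)]
    have := nat_choose_id n p
    have hℝ : (((n+1).choose p : ℕ) : ℝ) * ((n+1-p : ℕ) : ℝ) = ((n+1 : ℕ):ℝ) * (n.choose p : ℝ) := by
      exact_mod_cast congrArg (Nat.cast (R := ℝ)) this
    push_cast at hℝ ⊢
    nlinarith [hℝ]
  rw [Finset.sum_congr rfl hterm]
  have hsum : ∑ p ∈ range (n+2), (p : ℝ) * ((n+1).choose p) = (n+1) * 2^n := by
    have : ∑ p ∈ range (n+2), (p : ℝ) * ((n+1).choose p)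
        = ∑ i ∈ range (n+1), ((i+1 : ℕ) : ℝ) * ((n+1).choose (i+1)) := by
      rw [Finset.sum_range_succ' (fun p => (p:ℝ) * ((n+1).choose p))]
      simp
    rw [this]
    have hterm2 : ∀ i ∈ range (n+1),
        ((i+1 : ℕ) : ℝ) * ((n+1).choose (i+1)) = (n+1 : ℝ) * (n.choose i : ℝ) := by
      intro i _
      have h' := Nat.add_one_mul_choose_eq n i
      have : (((n+1) * n.choose i : ℕ) : ℝ) = (((n+1).choose (i+1) * (i+1) : ℕ) : ℝ) := by
        exact_mod_cast congrArg (Nat.cast (R := ℝ)) h'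
      push_cast at this
      push_cast
      linarith
    rw [Finset.sum_congr rfl hterm2, ← Finset.mul_sum]
    have := Nat.sum_range_choose n
    have : (∑ i ∈ range (n+1), (n.choose i : ℝ)) = 2^n := by
      exact_mod_cast congrArg (Nat.cast (R := ℝ)) this
    rw [this]
  have hle : (∑ p ∈ range (n+1), (p : ℝ) * ((n+1).choose p))
      ≤ ∑ p ∈ range (n+2), (p : ℝ) * ((n+1).choose p) := by
    apply Finset.sum_le_sum_of_subset_of_nonneg
    · intro x hx; simp only [mem_range] at *; omega
    · intros; positivity
  calc ∑ p ∈ range (n+1), (p:ℝ) * ((n+1).choose p) / (n+1)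
      = (∑ p ∈ range (n+1), (p:ℝ) * ((n+1).choose p)) / (n+1) := by rw [Finset.sum_div]
    _ ≤ ((n+1) * 2^n) / ((n:ℝ)+1) := by
        rw [← hsum, div_le_div_iff_of_pos_right (by positivity)]
        exact hle
    _ = 2^n := by field_simp

lemma bc_core {ι : Type*} [DecidableEq ι] (a : ι → ℝ) :
    ∀ (n : ℕ) (A : Finset ι), A.card = n → ∀ (T : Finset ι → EReal),
      (∀ (lam : ℝ) (J K : Finset ι), J ⊆ A → K ⊆ A →
          (∀ i ∈ A, a i < lam → (i ∈ J ↔ i ∈ K)) →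
          (J.filter fun i => lam ≤ a i).card = (K.filter fun i => lam ≤ a i).card →
          T J ≤ (lam : EReal) → T K ≤ (lam : EReal)) →
      ∀ p : ℕ,
        (∑ K ∈ A.powerset, if K.card = p then
            ((K.filter fun i => T K ≤ (a i : EReal)).card : ℝ) /
              (1 + (((A \ K).filter fun i => T K ≤ (a i : EReal)).card : ℝ))
          else 0)
          ≤ (A.card.choose p : ℝ) * p / (1 + (A.card : ℝ) - p) := by
  intro n
  induction n with
  | zero =>
    intro A hA T _ p
    rw [Finset.card_eq_zero] at hA
    subst hA
    rcases Nat.eq_zero_or_pos p with hp | hp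
    · subst hp; simp
    · simp [Nat.choose_eq_zero_of_lt hp, (Nat.pos_iff_ne_zero.mp hp)]
  | succ k ih =>
    intro A hA T hT p
    rcases Nat.eq_zero_or_pos p with hp | hp
    · subst hp
      have hLHS : (∑ K ∈ A.powerset, if K.card = 0 then
          ((K.filter fun i => T K ≤ (a i : EReal)).card : ℝ) /
            (1 + (((A \ K).filter fun i => T K ≤ (a i : EReal)).card : ℝ))
        else 0) = 0 := by
        apply Finset.sum_eq_zero
        intro K _
        by_cases h : K.card = 0
        · rw [Finset.card_eq_zero] at h
          subst h
          simp
        · simp [h]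
      rw [hLHS]
      simp
    obtain ⟨q, rfl⟩ : ∃ q, p = q + 1 := ⟨p - 1, by omega⟩
    have hAne : A.Nonempty := by
      rw [← Finset.card_pos, hA]; omega
    obtain ⟨i₀, hi₀A, hmin⟩ := A.exists_min_image a hAne
    by_cases hstop : ∃ J ∈ A.powerset, J.card = q + 1 ∧ T J ≤ (a i₀ : EReal)
    · -- stopped while everything is active
      obtain ⟨J₀, hJ₀, hJ₀c, hJ₀T⟩ := hstop
      rw [Finset.mem_powerset] at hJ₀
      have hall : ∀ K ∈ A.powerset, K.card = q + 1 → T K ≤ (a i₀ : EReal) := by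
        intro K hK hKc
        rw [Finset.mem_powerset] at hK
        refine hT (a i₀) J₀ K hJ₀ hK ?_ ?_ hJ₀T
        · intro i hi hlt
          exact absurd (hmin i hi) (not_le.mpr hlt)
        · rw [Finset.filter_true_of_mem fun i hi => hmin i (hJ₀ hi),
            Finset.filter_true_of_mem fun i hi => hmin i (hK hi), hJ₀c, hKc]
      have hterm : ∀ K ∈ A.powerset, (if K.card = q + 1 then
            ((K.filter fun i => T K ≤ (a i : EReal)).card : ℝ) /
              (1 + (((A \ K).filter fun i => T K ≤ (a i : EReal)).card : ℝ))
          else 0) = if K.card = q + 1 then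
            ((q+1 : ℕ) : ℝ) / (1 + ((A.card - (q+1) : ℕ) : ℝ)) else 0 := by
        intro K hK
        rw [Finset.mem_powerset] at hK
        by_cases h : K.card = q + 1
        · have hTK := hall K (Finset.mem_powerset.mpr hK) h
          have hfilt : ∀ (S : Finset ι), S ⊆ A →
              (S.filter fun i => T K ≤ (a i : EReal)) = S := by
            intro S hS
            apply Finset.filter_true_of_mem
            intro i hi
            refine le_trans hTK ?_
            exact_mod_cast EReal.coe_le_coe_iff.mpr (hmin i (hS hi))
          rw [if_pos h, if_pos h, hfilt K hK, hfilt (A \ K) (Finset.sdiff_subset), h,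
            Finset.card_sdiff_of_subset hK, h]
        · rw [if_neg h, if_neg h]
      rw [Finset.sum_congr rfl hterm, ← Finset.sum_filter, Finset.sum_const,
        ← Finset.powersetCard_eq_filter, Finset.card_powersetCard, hA, nsmul_eq_mul]
      have hle : q + 1 ≤ k + 1 := by
        have := hJ₀c ▸ Finset.card_le_card hJ₀
        omega
      have hcast : ((k + 1 - (q+1) : ℕ) : ℝ) = ((k:ℝ)+1) - ((q:ℝ)+1) := by
        rw [Nat.cast_sub hle]
        push_cast
        ring
      rw [hcast]
      apply le_of_eq
      push_cast
      ring
    · -- not stopped yet: induct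
      push_neg at hstop
      have hnostop : ∀ K ⊆ A, K.card = q + 1 → ¬ T K ≤ (a i₀ : EReal) := by
        intro K hK hKc
        exact not_le.mpr (hstop K (Finset.mem_powerset.mpr hK) hKc)
      set A' := A.erase i₀ with hA'def
      have hi₀A' : i₀ ∉ A' := Finset.notMem_erase _ _
      have hins : insert i₀ A' = A := Finset.insert_erase hi₀A
      have hA' : A'.card = k := by
        rw [hA'def, Finset.card_erase_of_mem hi₀A, hA]
        simp
      have hA'sub : A' ⊆ A := Finset.erase_subset _ _
      -- the two inherited rules
      have hT1 : ∀ (lam : ℝ) (J K : Finset ι), J ⊆ A' → K ⊆ A' →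
          (∀ i ∈ A', a i < lam → (i ∈ J ↔ i ∈ K)) →
          (J.filter fun i => lam ≤ a i).card = (K.filter fun i => lam ≤ a i).card →
          T J ≤ (lam : EReal) → T K ≤ (lam : EReal) := by
        intro lam J K hJ hK hagree hcount hTJ
        refine hT lam J K (hJ.trans hA'sub) (hK.trans hA'sub) ?_ hcount hTJ
        intro i hi hlt
        by_cases h : i = i₀
        · subst h
          constructor <;> intro h' <;>
            [exact absurd (hJ h') hi₀A'; exact absurd (hK h') hi₀A']
        · exact hagree i (Finset.mem_erase.mpr ⟨h, hi⟩) hlt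
      have hT2 : ∀ (lam : ℝ) (J K : Finset ι), J ⊆ A' → K ⊆ A' →
          (∀ i ∈ A', a i < lam → (i ∈ J ↔ i ∈ K)) →
          (J.filter fun i => lam ≤ a i).card = (K.filter fun i => lam ≤ a i).card →
          T (insert i₀ J) ≤ (lam : EReal) → T (insert i₀ K) ≤ (lam : EReal) := by
        intro lam J K hJ hK hagree hcount hTJ
        have hJ' : insert i₀ J ⊆ A := by
          rw [← hins]; exact Finset.insert_subset_insert _ hJ
        have hK' : insert i₀ K ⊆ A := by
          rw [← hins]; exact Finset.insert_subset_insert _ hK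
        refine hT lam (insert i₀ J) (insert i₀ K) hJ' hK' ?_ ?_ hTJ
        · intro i hi hlt
          by_cases h : i = i₀
          · subst h; simp
          · have hiA' : i ∈ A' := Finset.mem_erase.mpr ⟨h, hi⟩
            have := hagree i hiA' hlt
            simp [Finset.mem_insert, h, this]
        · have hJi : i₀ ∉ J := fun h => hi₀A' (hJ h)
          have hKi : i₀ ∉ K := fun h => hi₀A' (hK h)
          rw [Finset.filter_insert, Finset.filter_insert]
          by_cases h : lam ≤ a i₀
          · rw [if_pos h, if_pos h, Finset.card_insert_of_notMem
              (fun hh => hJi (Finset.mem_filter.mp hh).1),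
              Finset.card_insert_of_notMem (fun hh => hKi (Finset.mem_filter.mp hh).1), hcount]
          · rw [if_neg h, if_neg h, hcount]
      rw [← hins, Finset.sum_powerset_insert hi₀A']
      -- first sum
      have hsum1 : (∑ K ∈ A'.powerset, if K.card = q + 1 then
            ((K.filter fun i => T K ≤ (a i : EReal)).card : ℝ) /
              (1 + (((insert i₀ A' \ K).filter fun i => T K ≤ (a i : EReal)).card : ℝ))
          else 0)
          ≤ (k.choose (q+1) : ℝ) * ((q:ℝ)+1) / (1 + (k:ℝ) - ((q:ℝ)+1)) := by
        have := ih A' hA' T hT1 (q+1)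
        rw [hA'] at this
        push_cast at this
        refine le_trans (le_of_eq ?_) this
        apply Finset.sum_congr rfl
        intro K hK
        rw [Finset.mem_powerset] at hK
        by_cases h : K.card = q + 1
        · rw [if_pos h, if_pos h]
          congr 2
          have hKA : K ⊆ A := hK.trans hA'sub
          have hdiff : insert i₀ A' \ K = insert i₀ (A' \ K) := by
            rw [Finset.insert_sdiff_of_notMem _ (fun hh => hi₀A' (hK hh))]
          rw [hdiff, Finset.filter_insert, if_neg (hnostop K hKA h)]
        · rw [if_neg h, if_neg h]
      -- second sum
      have hsum2 : (∑ K ∈ A'.powerset, if (insert i₀ K).card = q + 1 then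
            (((insert i₀ K).filter fun i => T (insert i₀ K) ≤ (a i : EReal)).card : ℝ) /
              (1 + (((insert i₀ A' \ insert i₀ K).filter
                fun i => T (insert i₀ K) ≤ (a i : EReal)).card : ℝ))
          else 0)
          ≤ (k.choose q : ℝ) * (q:ℝ) / (1 + (k:ℝ) - (q:ℝ)) := by
        have := ih A' hA' (fun K => T (insert i₀ K)) hT2 q
        rw [hA'] at this
        push_cast at this
        refine le_trans (le_of_eq ?_) this
        apply Finset.sum_congr rfl
        intro K hK
        rw [Finset.mem_powerset] at hK
        have hKi : i₀ ∉ K := fun h => hi₀A' (hK h)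
        have hcard : (insert i₀ K).card = K.card + 1 := Finset.card_insert_of_notMem hKi
        by_cases h : K.card = q
        · rw [if_pos (by omega : (insert i₀ K).card = q + 1), if_pos h]
          have hKA : insert i₀ K ⊆ A := by
            rw [← hins]; exact Finset.insert_subset_insert _ hK
          have hno := hnostop (insert i₀ K) hKA (by omega)
          congr 2
          · rw [Finset.filter_insert, if_neg hno]
          · have hdiff : insert i₀ A' \ insert i₀ K = A' \ K := by
              ext x
              by_cases hx : x = i₀
              · subst hx; simp [hi₀A']
              · simp [hx]
            rw [hdiff]
        · rw [if_neg (by omega : ¬ (insert i₀ K).card = q + 1), if_neg h]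
      refine le_trans (add_le_add hsum1 hsum2) ?_
      have hc1 : (1 + (k:ℝ) - ((q:ℝ)+1)) = (k:ℝ) - q := by ring
      rw [hins, hA]
      push_cast
      calc (k.choose (q+1) : ℝ) * ((q:ℝ)+1) / (1 + (k:ℝ) - ((q:ℝ)+1)) + (k.choose q : ℝ) * q / (1 + (k:ℝ) - q)
          = (k.choose (q+1) : ℝ) * ((q:ℝ)+1) / ((k:ℝ) - q) + (k.choose q : ℝ) * q / (1 + (k:ℝ) - q) := by
            rw [hc1]
        _ ≤ ((k+1).choose (q+1) : ℝ) * ((q:ℝ)+1) / (1 + (k:ℝ) - q) := by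
            have := bc_step k q
            push_cast at this
            exact this
        _ = ((k+1).choose (q+1) : ℝ) * ((q:ℝ)+1) / (1 + ((k:ℝ)+1) - ((q:ℝ)+1)) := by
            ring_nf

section Threshold

variable {m : ℕ} (α : ℝ) (G : Fin m → ℝ)

/-- The defining set of the mirror threshold. -/
def thrSet : Set ℝ :=
  {x : ℝ | (∃ i, |G i| = x) ∧
    ((1 : ℝ) + ((Finset.univ.filter fun j => G j ≤ -x).card : ℝ)) /
      max ((Finset.univ.filter fun j => x ≤ G j).card : ℝ) 1 ≤ α}

lemma mirrorThreshold_eq :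
    mirrorThreshold α G = sInf ((fun x : ℝ => (x : EReal)) '' thrSet α G) := rfl

lemma thrSet_finite : (thrSet α G).Finite :=
  Set.Finite.subset (Set.finite_range fun i => |G i|) (fun x hx => hx.1)

lemma mirrorThreshold_le_iff (lam : ℝ) :
    mirrorThreshold α G ≤ (lam : EReal) ↔ ∃ x ∈ thrSet α G, x ≤ lam := by
  constructor
  · intro h
    rcases Set.eq_empty_or_nonempty (thrSet α G) with hS | hS
    · exfalso
      rw [mirrorThreshold_eq, hS, Set.image_empty, sInf_empty] at h
      exact absurd (lt_of_le_of_lt h (EReal.coe_lt_top lam)) (lt_irrefl _)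
    · have hfin : ((fun x : ℝ => (x : EReal)) '' thrSet α G).Finite :=
        (thrSet_finite α G).image _
      have hne : ((fun x : ℝ => (x : EReal)) '' thrSet α G).Nonempty := hS.image _
      have hmem := hne.csInf_mem hfin
      obtain ⟨x, hx, hxeq⟩ := hmem
      refine ⟨x, hx, ?_⟩
      rw [← EReal.coe_le_coe_iff]
      have hxeq' : (x : EReal) = sInf ((fun x : ℝ => (x : EReal)) '' thrSet α G) := hxeq
      rw [mirrorThreshold_eq] at h
      exact le_trans (le_of_eq hxeq') h
  · rintro ⟨x, hx, hxlam⟩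
    rw [mirrorThreshold_eq]
    refine le_trans (sInf_le ⟨x, hx, rfl⟩) ?_
    exact EReal.coe_le_coe_iff.mpr hxlam

lemma mirrorThreshold_pos (h : ∀ i, G i ≠ 0) : (0 : EReal) < mirrorThreshold α G := by
  by_contra hc
  push_neg at hc
  rw [show (0 : EReal) = ((0:ℝ) : EReal) from rfl] at hc
  rw [mirrorThreshold_le_iff] at hc
  obtain ⟨x, hx, hx0⟩ := hc
  obtain ⟨i, hi⟩ := hx.1
  have : 0 < x := hi ▸ abs_pos.mpr (h i)
  linarith

lemma mirrorThreshold_attained (h : mirrorThreshold α G ≠ ⊤) :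
    ∃ x ∈ thrSet α G, mirrorThreshold α G = (x : EReal) := by
  rcases Set.eq_empty_or_nonempty (thrSet α G) with hS | hS
  · exfalso
    apply h
    rw [mirrorThreshold_eq, hS, Set.image_empty, sInf_empty]
  · have hfin : ((fun x : ℝ => (x : EReal)) '' thrSet α G).Finite :=
      (thrSet_finite α G).image _
    have hmem := (hS.image (fun x : ℝ => (x : EReal))).csInf_mem hfin
    obtain ⟨x, hx, hxeq⟩ := hmem
    have hxeq' : (x : EReal) = sInf ((fun x : ℝ => (x : EReal)) '' thrSet α G) := hxeq
    exact ⟨x, hx, by rw [mirrorThreshold_eq]; exact hxeq'.symm⟩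

lemma sum_mirrorEValue_eq (H0 : Finset (Fin m)) :
    ∑ i ∈ H0, mirrorEValue α G i
      = (m : ℝ) * ((H0.filter fun i => mirrorThreshold α G ≤ (G i : EReal)).card : ℝ) /
        ((1 : ℝ) + ((Finset.univ.filter fun j =>
          (G j : EReal) ≤ -(mirrorThreshold α G)).card : ℝ)) := by
  simp only [mirrorEValue]
  rw [← Finset.sum_div, ← Finset.mul_sum, Finset.sum_boole]

lemma denom_pos :
    (0:ℝ) < (1 : ℝ) + ((Finset.univ.filter fun j =>
        (G j : EReal) ≤ -(mirrorThreshold α G)).card : ℝ) := by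
  positivity

lemma mirrorEValue_nonneg (i : Fin m) : 0 ≤ mirrorEValue α G i := by
  rw [mirrorEValue]
  apply div_nonneg _ (le_of_lt (denom_pos α G))
  positivity

lemma mirrorEValue_le (i : Fin m) : mirrorEValue α G i ≤ m := by
  rw [mirrorEValue]
  rw [div_le_iff₀ (denom_pos α G)]
  have h1 : (if mirrorThreshold α G ≤ (G i : EReal) then (1:ℝ) else 0) ≤ 1 := by
    split <;> norm_num
  nlinarith [Nat.cast_nonneg (α := ℝ) (Finset.univ.filter fun j =>
      (G j : EReal) ≤ -(mirrorThreshold α G)).card, Nat.cast_nonneg (α := ℝ) m,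
    (by positivity : (0:ℝ) ≤ (m:ℝ) * (if mirrorThreshold α G ≤ (G i : EReal) then (1:ℝ) else 0))]

/-- pointwise FDP bound by the e-value average -/
lemma fdp_le_evalue_sum (hα : 0 < α) (hm : 1 ≤ m) (H0 : Finset (Fin m)) :
    ((mirrorRejection α G ∩ H0).card : ℝ) / max ((mirrorRejection α G).card : ℝ) 1
      ≤ α / m * ∑ i ∈ H0, mirrorEValue α G i := by
  have hmpos : (0:ℝ) < m := by exact_mod_cast hm
  rw [sum_mirrorEValue_eq]
  by_cases hc : (mirrorRejection α G ∩ H0).card = 0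
  · rw [hc]
    simp only [Nat.cast_zero, zero_div]
    apply mul_nonneg (by positivity)
    apply div_nonneg (by positivity) (le_of_lt (denom_pos α G))
  · -- there is a rejection, so the threshold is attained
    have hne : (mirrorRejection α G ∩ H0).Nonempty := Finset.card_pos.mp (Nat.pos_of_ne_zero hc)
    obtain ⟨i₁, hi₁⟩ := hne
    have hi₁R : i₁ ∈ mirrorRejection α G := (Finset.mem_inter.mp hi₁).1
    have hτi : mirrorThreshold α G ≤ (G i₁ : EReal) := by
      simpa [mirrorRejection] using hi₁R
    have hτtop : mirrorThreshold α G ≠ ⊤ :=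
      fun h => absurd (h ▸ hτi) (by simp [EReal.coe_lt_top])
    obtain ⟨x, hxS, hxeq⟩ := mirrorThreshold_attained α G hτtop
    -- identify the cardinalities
    have hR : mirrorRejection α G = Finset.univ.filter fun j => x ≤ G j := by
      rw [mirrorRejection]
      apply Finset.filter_congr
      intro j _
      rw [hxeq]
      exact ⟨fun h => by exact_mod_cast h, fun h => by exact_mod_cast h⟩
    have hD : (Finset.univ.filter fun j => (G j : EReal) ≤ -(mirrorThreshold α G))
        = Finset.univ.filter fun j => G j ≤ -x := by
      apply Finset.filter_congr
      intro j _
      rw [hxeq, ← EReal.coe_neg]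
      exact ⟨fun h => by exact_mod_cast h, fun h => by exact_mod_cast h⟩
    have hcond := hxS.2
    set Npos := ((Finset.univ.filter fun j => x ≤ G j).card : ℝ) with hNpos
    set Nneg := ((Finset.univ.filter fun j => G j ≤ -x).card : ℝ) with hNneg
    have hmax : (0:ℝ) < max Npos 1 := lt_of_lt_of_le one_pos (le_max_right _ _)
    have hcond' : 1 + Nneg ≤ α * max Npos 1 := by
      rw [div_le_iff₀ hmax] at hcond
      exact hcond
    set c := (((mirrorRejection α G) ∩ H0).card : ℝ) with hcdef
    have hc0 : 0 ≤ c := Nat.cast_nonneg _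
    have hRcard : ((mirrorRejection α G).card : ℝ) = Npos := by rw [hR]
    have hfilt : ((H0.filter fun i => mirrorThreshold α G ≤ (G i : EReal)).card : ℝ) = c := by
      rw [hcdef]
      congr 1
      congr 1
      ext j
      simp only [Finset.mem_filter, Finset.mem_inter, mirrorRejection, Finset.mem_univ,
        true_and]
      tauto
    rw [hfilt, hD, hRcard]
    have hNnegpos : (0:ℝ) < 1 + Nneg := by positivity
    rw [div_le_iff₀ hmax]
    have key : c * (1 + Nneg) ≤ c * (α * max Npos 1) :=
      mul_le_mul_of_nonneg_left hcond' hc0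
    have expand : α / ↑m * ((m:ℝ) * c / (1 + Nneg)) * max Npos 1
        = α * c * max Npos 1 / (1 + Nneg) := by
      field_simp
    rw [expand, le_div_iff₀ hNnegpos]
    nlinarith [key]

end Threshold

-- ### section 4
def flipSigns {m : ℕ} (J : Finset (Fin m)) (w : Fin m → ℝ) : Fin m → ℝ :=
  fun i => if i ∈ J then -(w i) else w i

def signVec {m : ℕ} (H0 K : Finset (Fin m)) (w : Fin m → ℝ) : Fin m → ℝ :=
  fun i => if i ∈ H0 then (if i ∈ K then |w i| else -|w i|) else w i

lemma abs_signVec {m : ℕ} (H0 K : Finset (Fin m)) (w : Fin m → ℝ) (i : Fin m) :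
    |signVec H0 K w i| = |w i| := by
  unfold signVec
  split_ifs <;> simp [abs_neg, abs_abs]

lemma signVec_ne_zero {m : ℕ} (H0 K : Finset (Fin m)) (w : Fin m → ℝ)
    (hw : ∀ i, w i ≠ 0) (i : Fin m) : signVec H0 K w i ≠ 0 := by
  intro h
  have := abs_signVec H0 K w i
  rw [h, abs_zero] at this
  exact hw i (abs_eq_zero.mp this.symm)

lemma card_univ_filter_split {m : ℕ} (H0 : Finset (Fin m)) (P : Fin m → Prop) :
    (Finset.univ.filter P).card = (H0.filter P).card + (H0ᶜ.filter P).card := by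
  rw [← Finset.card_union_of_disjoint
      (Finset.disjoint_filter_filter disjoint_compl_right),
    ← Finset.filter_union, Finset.union_compl]

lemma cardpos_signVec {m : ℕ} (H0 L : Finset (Fin m)) (w : Fin m → ℝ) (x : ℝ)
    (hx : 0 < x) (hL : L ⊆ H0) :
    (Finset.univ.filter fun j => x ≤ signVec H0 L w j).card
      = (L.filter fun j => x ≤ |w j|).card + (H0ᶜ.filter fun j => x ≤ w j).card := by
  rw [card_univ_filter_split H0]
  congr 1
  · congr 1
    ext j
    simp only [Finset.mem_filter]
    by_cases hjH : j ∈ H0 <;> by_cases hjL : j ∈ L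
    · simp only [signVec, if_pos hjH, if_pos hjL]
      tauto
    · simp only [signVec, if_pos hjH, if_neg hjL]
      have : ¬ x ≤ -|w j| := by
        have := abs_nonneg (w j); intro hcon; linarith
      tauto
    · exact absurd (hL hjL) hjH
    · tauto
  · congr 1
    apply Finset.filter_congr
    intro j hj
    rw [Finset.mem_compl] at hj
    simp [signVec, hj]

lemma cardneg_signVec {m : ℕ} (H0 L : Finset (Fin m)) (w : Fin m → ℝ) (x : ℝ)
    (hx : 0 < x) (hL : L ⊆ H0) :
    (Finset.univ.filter fun j => signVec H0 L w j ≤ -x).card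
      = ((H0 \ L).filter fun j => x ≤ |w j|).card + (H0ᶜ.filter fun j => w j ≤ -x).card := by
  rw [card_univ_filter_split H0]
  congr 1
  · congr 1
    ext j
    simp only [Finset.mem_filter, Finset.mem_sdiff]
    by_cases hjH : j ∈ H0 <;> by_cases hjL : j ∈ L
    · simp only [signVec, if_pos hjH, if_pos hjL]
      have : ¬ |w j| ≤ -x := by
        have := abs_nonneg (w j); intro hcon; linarith
      tauto
    · simp only [signVec, if_pos hjH, if_neg hjL]
      constructor
      · rintro ⟨-, h⟩; exact ⟨⟨hjH, hjL⟩, by linarith⟩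
      · rintro ⟨-, h⟩; exact ⟨hjH, by linarith⟩
    · exact absurd (hL hjL) hjH
    · tauto
  · congr 1
    apply Finset.filter_congr
    intro j hj
    rw [Finset.mem_compl] at hj
    simp [signVec, hj]

lemma count_eq_aux {m : ℕ} (H0 J K : Finset (Fin m)) (a : Fin m → ℝ) (x lam : ℝ)
    (hxlam : x ≤ lam) (hJ : J ⊆ H0) (hK : K ⊆ H0)
    (hagree : ∀ i ∈ H0, a i < lam → (i ∈ J ↔ i ∈ K))
    (hcount : (J.filter fun i => lam ≤ a i).card = (K.filter fun i => lam ≤ a i).card) :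
    (J.filter fun i => x ≤ a i).card = (K.filter fun i => x ≤ a i).card := by
  have e1 : ∀ L : Finset (Fin m),
      (L.filter fun i => x ≤ a i).filter (fun i => lam ≤ a i)
        = L.filter fun i => lam ≤ a i := by
    intro L
    rw [Finset.filter_filter]
    apply Finset.filter_congr
    intro i _
    exact ⟨And.right, fun h => ⟨le_trans hxlam h, h⟩⟩
  have e2 : (J.filter fun i => x ≤ a i).filter (fun i => ¬ lam ≤ a i)
      = (K.filter fun i => x ≤ a i).filter (fun i => ¬ lam ≤ a i) := by
    ext i
    simp only [Finset.mem_filter]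
    constructor
    · rintro ⟨⟨hiJ, hxi⟩, hnl⟩
      exact ⟨⟨(hagree i (hJ hiJ) (not_le.mp hnl)).mp hiJ, hxi⟩, hnl⟩
    · rintro ⟨⟨hiK, hxi⟩, hnl⟩
      exact ⟨⟨(hagree i (hK hiK) (not_le.mp hnl)).mpr hiK, hxi⟩, hnl⟩
  have hJs := Finset.card_filter_add_card_filter_not
    (s := J.filter fun i => x ≤ a i) (p := fun i => lam ≤ a i)
  have hKs := Finset.card_filter_add_card_filter_not
    (s := K.filter fun i => x ≤ a i) (p := fun i => lam ≤ a i)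
  rw [e1 J] at hJs
  rw [e1 K] at hKs
  rw [e2] at hJs
  omega

lemma st_prop {m : ℕ} (α : ℝ) (H0 : Finset (Fin m)) (w : Fin m → ℝ) (hw : ∀ i, w i ≠ 0)
    (lam : ℝ) (J K : Finset (Fin m)) (hJ : J ⊆ H0) (hK : K ⊆ H0)
    (hagree : ∀ i ∈ H0, |w i| < lam → (i ∈ J ↔ i ∈ K))
    (hcount : (J.filter fun i => lam ≤ |w i|).card = (K.filter fun i => lam ≤ |w i|).card)
    (hT : mirrorThreshold α (signVec H0 J w) ≤ (lam : EReal)) :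
    mirrorThreshold α (signVec H0 K w) ≤ (lam : EReal) := by
  rw [mirrorThreshold_le_iff] at hT ⊢
  obtain ⟨x, hxS, hxlam⟩ := hT
  refine ⟨x, ?_, hxlam⟩
  obtain ⟨⟨i₂, hi₂⟩, hcond⟩ := hxS
  rw [abs_signVec] at hi₂
  have hx : 0 < x := hi₂ ▸ abs_pos.mpr (hw i₂)
  have ecard : (J.filter fun i => x ≤ |w i|).card = (K.filter fun i => x ≤ |w i|).card :=
    count_eq_aux H0 J K (fun i => |w i|) x lam hxlam hJ hK hagree hcount
  have sdJ : ((H0 \ J).filter fun j => x ≤ |w j|).card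
      = (H0.filter fun j => x ≤ |w j|).card - (J.filter fun j => x ≤ |w j|).card := by
    have : (H0 \ J).filter (fun j => x ≤ |w j|)
        = H0.filter (fun j => x ≤ |w j|) \ J.filter (fun j => x ≤ |w j|) := by
      ext i
      simp only [Finset.mem_filter, Finset.mem_sdiff]
      tauto
    rw [this, Finset.card_sdiff_of_subset (Finset.filter_subset_filter _ hJ)]
  have sdK : ((H0 \ K).filter fun j => x ≤ |w j|).card
      = (H0.filter fun j => x ≤ |w j|).card - (K.filter fun j => x ≤ |w j|).card := by
    have : (H0 \ K).filter (fun j => x ≤ |w j|)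
        = H0.filter (fun j => x ≤ |w j|) \ K.filter (fun j => x ≤ |w j|) := by
      ext i
      simp only [Finset.mem_filter, Finset.mem_sdiff]
      tauto
    rw [this, Finset.card_sdiff_of_subset (Finset.filter_subset_filter _ hK)]
  have eneg : (Finset.univ.filter fun j => signVec H0 K w j ≤ -x).card
      = (Finset.univ.filter fun j => signVec H0 J w j ≤ -x).card := by
    rw [cardneg_signVec H0 K w x hx hK, cardneg_signVec H0 J w x hx hJ, sdJ, sdK, ecard]
  have epos : (Finset.univ.filter fun j => x ≤ signVec H0 K w j).card
      = (Finset.univ.filter fun j => x ≤ signVec H0 J w j).card := by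
    rw [cardpos_signVec H0 K w x hx hK, cardpos_signVec H0 J w x hx hJ, ecard]
  refine ⟨⟨i₂, by rw [abs_signVec]; exact hi₂⟩, ?_⟩
  rw [eneg, epos]
  exact hcond

lemma evalue_sum_le_ratio {m : ℕ} (α : ℝ) (H0 K : Finset (Fin m)) (w : Fin m → ℝ)
    (hw : ∀ i, w i ≠ 0) (hK : K ⊆ H0) :
    ∑ i ∈ H0, mirrorEValue α (signVec H0 K w) i
      ≤ (m : ℝ) * (((K.filter fun i =>
          mirrorThreshold α (signVec H0 K w) ≤ ((|w i| : ℝ) : EReal)).card : ℝ) /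
        (1 + (((H0 \ K).filter fun i =>
          mirrorThreshold α (signVec H0 K w) ≤ ((|w i| : ℝ) : EReal)).card : ℝ))) := by
  rw [sum_mirrorEValue_eq]
  set τ := mirrorThreshold α (signVec H0 K w) with hτ
  have hτpos : (0 : EReal) < τ := mirrorThreshold_pos α _ (signVec_ne_zero H0 K w hw)
  have hnum : (H0.filter fun i => τ ≤ (signVec H0 K w i : EReal))
      = K.filter fun i => τ ≤ ((|w i| : ℝ) : EReal) := by
    ext i
    simp only [Finset.mem_filter]
    by_cases hiH : i ∈ H0 <;> by_cases hiK : i ∈ K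
    · simp only [signVec, if_pos hiH, if_pos hiK]
      tauto
    · simp only [signVec, if_pos hiH, if_neg hiK]
      have : ¬ τ ≤ ((-|w i| : ℝ) : EReal) := by
        intro hcon
        have h1 : ((-|w i| : ℝ) : EReal) ≤ ((0:ℝ) : EReal) := by
          apply EReal.coe_le_coe_iff.mpr
          have := abs_nonneg (w i); linarith
        exact absurd (lt_of_lt_of_le hτpos (le_trans hcon h1)) (by simp)
      tauto
    · exact ⟨fun h => absurd h.1 hiH, fun h => absurd (hK h.1) hiH⟩
    · exact ⟨fun h => absurd h.1 hiH, fun h => absurd (hK h.1) hiH⟩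
  have hsub : ((H0 \ K).filter fun i => τ ≤ ((|w i| : ℝ) : EReal))
      ⊆ Finset.univ.filter fun j => (signVec H0 K w j : EReal) ≤ -τ := by
    intro i hi
    rw [Finset.mem_filter, Finset.mem_sdiff] at hi
    obtain ⟨⟨hiH, hiK⟩, hτi⟩ := hi
    rw [Finset.mem_filter]
    refine ⟨Finset.mem_univ _, ?_⟩
    have : signVec H0 K w i = -|w i| := by simp [signVec, hiH, hiK]
    rw [this]
    rw [show ((-|w i| : ℝ) : EReal) = -((|w i| : ℝ) : EReal) from EReal.coe_neg _]
    exact EReal.neg_le_neg_iff.mpr hτi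
  have hD : (((H0 \ K).filter fun i => τ ≤ ((|w i| : ℝ) : EReal)).card : ℝ)
      ≤ ((Finset.univ.filter fun j => (signVec H0 K w j : EReal) ≤ -τ).card : ℝ) := by
    exact_mod_cast Finset.card_le_card hsub
  rw [hnum]
  rw [mul_div_assoc]
  apply mul_le_mul_of_nonneg_left _ (Nat.cast_nonneg m)
  apply div_le_div_of_nonneg_left (Nat.cast_nonneg _) (by positivity)
  linarith

lemma det_bound {m : ℕ} (α : ℝ) (H0 : Finset (Fin m)) (w : Fin m → ℝ) (hw : ∀ i, w i ≠ 0) :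
    ∑ K ∈ H0.powerset, ∑ i ∈ H0, mirrorEValue α (signVec H0 K w) i
      ≤ 2 ^ H0.card * m := by
  set n := H0.card with hn
  set a : Fin m → ℝ := fun i => |w i| with ha
  set T : Finset (Fin m) → EReal := fun K => mirrorThreshold α (signVec H0 K w) with hTdef
  have h1 : ∑ K ∈ H0.powerset, ∑ i ∈ H0, mirrorEValue α (signVec H0 K w) i
      ≤ ∑ K ∈ H0.powerset, (m:ℝ) * (((K.filter fun i => T K ≤ ((a i : ℝ) : EReal)).card : ℝ) /
          (1 + (((H0 \ K).filter fun i => T K ≤ ((a i : ℝ) : EReal)).card : ℝ))) :=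
    Finset.sum_le_sum fun K hK => evalue_sum_le_ratio α H0 K w hw (Finset.mem_powerset.mp hK)
  refine le_trans h1 ?_
  rw [← Finset.mul_sum]
  have h2 : ∑ K ∈ H0.powerset, (((K.filter fun i => T K ≤ ((a i : ℝ) : EReal)).card : ℝ) /
        (1 + (((H0 \ K).filter fun i => T K ≤ ((a i : ℝ) : EReal)).card : ℝ)))
      = ∑ p ∈ Finset.range (n+1), ∑ K ∈ H0.powerset, (if K.card = p then
          (((K.filter fun i => T K ≤ ((a i : ℝ) : EReal)).card : ℝ) /
            (1 + (((H0 \ K).filter fun i => T K ≤ ((a i : ℝ) : EReal)).card : ℝ))) else 0) := by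
    rw [Finset.sum_comm]
    apply Finset.sum_congr rfl
    intro K hK
    rw [Finset.sum_ite_eq (Finset.range (n+1)) K.card]
    rw [if_pos]
    rw [Finset.mem_range]
    have := Finset.card_le_card (Finset.mem_powerset.mp hK)
    omega
  have h3 : ∑ K ∈ H0.powerset, (((K.filter fun i => T K ≤ ((a i : ℝ) : EReal)).card : ℝ) /
        (1 + (((H0 \ K).filter fun i => T K ≤ ((a i : ℝ) : EReal)).card : ℝ))) ≤ 2 ^ n := by
    rw [h2]
    refine le_trans (Finset.sum_le_sum fun p _ => ?_) (sum_phi n)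
    have hst : ∀ (lam : ℝ) (J K : Finset (Fin m)), J ⊆ H0 → K ⊆ H0 →
        (∀ i ∈ H0, a i < lam → (i ∈ J ↔ i ∈ K)) →
        (J.filter fun i => lam ≤ a i).card = (K.filter fun i => lam ≤ a i).card →
        T J ≤ (lam : EReal) → T K ≤ (lam : EReal) :=
      fun lam J K hJ hK hag hc hTJ => st_prop α H0 w hw lam J K hJ hK hag hc hTJ
    have := bc_core a n H0 hn.symm T hst p
    rw [← hn] at this
    exact this
  calc (m:ℝ) * ∑ K ∈ H0.powerset, (((K.filter fun i => T K ≤ ((a i : ℝ) : EReal)).card : ℝ) /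
        (1 + (((H0 \ K).filter fun i => T K ≤ ((a i : ℝ) : EReal)).card : ℝ)))
      ≤ (m:ℝ) * 2 ^ n := mul_le_mul_of_nonneg_left h3 (Nat.cast_nonneg m)
    _ = 2 ^ n * m := mul_comm _ _

lemma flipSigns_eq_signVec {m : ℕ} (H0 J : Finset (Fin m)) (w : Fin m → ℝ)
    (hJ : J ⊆ H0) :
    flipSigns J w = signVec H0 (J ∆ (H0.filter fun i => 0 < w i)) w := by
  set J₀ := H0.filter fun i => 0 < w i with hJ₀
  funext i
  by_cases hiH : i ∈ H0
  · have hmem : i ∈ J ∆ J₀ ↔ ((i ∈ J ∧ i ∉ J₀) ∨ (i ∈ J₀ ∧ i ∉ J)) := Finset.mem_symmDiff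
    by_cases hiJ : i ∈ J <;> by_cases hi0 : 0 < w i
    · have hJ₀i : i ∈ J₀ := Finset.mem_filter.mpr ⟨hiH, hi0⟩
      have : i ∉ J ∆ J₀ := by rw [hmem]; tauto
      simp only [flipSigns, signVec, if_pos hiJ, if_pos hiH, if_neg this]
      rw [abs_of_pos hi0]
    · have hJ₀i : i ∉ J₀ := fun h => hi0 (Finset.mem_filter.mp h).2
      have : i ∈ J ∆ J₀ := by rw [hmem]; tauto
      simp only [flipSigns, signVec, if_pos hiJ, if_pos hiH, if_pos this]
      rw [abs_of_nonpos (not_lt.mp hi0)]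
    · have hJ₀i : i ∈ J₀ := Finset.mem_filter.mpr ⟨hiH, hi0⟩
      have : i ∈ J ∆ J₀ := by rw [hmem]; tauto
      simp only [flipSigns, signVec, if_neg hiJ, if_pos hiH, if_pos this]
      rw [abs_of_pos hi0]
    · have hJ₀i : i ∉ J₀ := fun h => hi0 (Finset.mem_filter.mp h).2
      have : i ∉ J ∆ J₀ := by rw [hmem]; tauto
      simp only [flipSigns, signVec, if_neg hiJ, if_pos hiH, if_neg this]
      rw [abs_of_nonpos (not_lt.mp hi0)]
      ring
  · have hiJ : i ∉ J := fun h => hiH (hJ h)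
    simp only [flipSigns, signVec, if_neg hiJ, if_neg hiH]

lemma det_flip {m : ℕ} (α : ℝ) (H0 : Finset (Fin m)) (w : Fin m → ℝ) (hw : ∀ i, w i ≠ 0) :
    ∑ J ∈ H0.powerset, ∑ i ∈ H0, mirrorEValue α (flipSigns J w) i ≤ 2 ^ H0.card * m := by
  set J₀ := H0.filter fun i => 0 < w i with hJ₀
  have hJ₀sub : J₀ ⊆ H0 := Finset.filter_subset _ _
  have hmem : ∀ J ∈ H0.powerset, J ∆ J₀ ∈ H0.powerset := by
    intro J hJ
    rw [Finset.mem_powerset] at hJ ⊢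
    exact le_trans symmDiff_le_sup (Finset.union_subset hJ hJ₀sub)
  have hre : ∑ J ∈ H0.powerset, ∑ i ∈ H0, mirrorEValue α (flipSigns J w) i
      = ∑ K ∈ H0.powerset, ∑ i ∈ H0, mirrorEValue α (signVec H0 K w) i := by
    refine Finset.sum_nbij' (i := fun J => J ∆ J₀) (j := fun K => K ∆ J₀)
      hmem hmem (fun J _ => symmDiff_symmDiff_cancel_right J₀ J)
      (fun K _ => symmDiff_symmDiff_cancel_right J₀ K) ?_
    intro J hJ
    rw [flipSigns_eq_signVec H0 J w (Finset.mem_powerset.mp hJ)]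
  rw [hre]
  exact det_bound α H0 w hw

section Meas

variable {m : ℕ} (α : ℝ)

lemma meas_count_le (c : (Fin m → ℝ) → ℝ) (hc : Measurable c) :
    Measurable fun w : Fin m → ℝ => ((Finset.univ.filter fun j => w j ≤ c w).card : ℝ) := by
  have heq : (fun w : Fin m → ℝ => ((Finset.univ.filter fun j => w j ≤ c w).card : ℝ))
      = fun w => ∑ j : Fin m, if w j ≤ c w then (1:ℝ) else 0 := by
    funext w
    rw [Finset.sum_boole]
  rw [heq]
  apply Finset.measurable_sum
  intro j _
  exact Measurable.ite (measurableSet_le (measurable_pi_apply j) hc)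
    measurable_const measurable_const

lemma meas_count_ge (c : (Fin m → ℝ) → ℝ) (hc : Measurable c) :
    Measurable fun w : Fin m → ℝ => ((Finset.univ.filter fun j => c w ≤ w j).card : ℝ) := by
  have heq : (fun w : Fin m → ℝ => ((Finset.univ.filter fun j => c w ≤ w j).card : ℝ))
      = fun w => ∑ j : Fin m, if c w ≤ w j then (1:ℝ) else 0 := by
    funext w
    rw [Finset.sum_boole]
  rw [heq]
  apply Finset.measurable_sum
  intro j _
  exact Measurable.ite (measurableSet_le hc (measurable_pi_apply j))
    measurable_const measurable_const

lemma measurableSet_thr_le (c : (Fin m → ℝ) → ℝ) (hc : Measurable c) :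
    MeasurableSet {w : Fin m → ℝ | mirrorThreshold α w ≤ (c w : EReal)} := by
  have heq : {w : Fin m → ℝ | mirrorThreshold α w ≤ (c w : EReal)}
      = ⋃ k : Fin m, ({w : Fin m → ℝ |
          ((1 : ℝ) + ((Finset.univ.filter fun j => w j ≤ -|w k|).card : ℝ)) /
            max ((Finset.univ.filter fun j => |w k| ≤ w j).card : ℝ) 1 ≤ α}
          ∩ {w : Fin m → ℝ | |w k| ≤ c w}) := by
    ext w
    simp only [Set.mem_setOf_eq, Set.mem_iUnion, Set.mem_inter_iff]
    rw [mirrorThreshold_le_iff]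
    constructor
    · rintro ⟨x, ⟨⟨i, hi⟩, hcond⟩, hxle⟩
      exact ⟨i, by rw [hi]; exact hcond, by rw [hi]; exact hxle⟩
    · rintro ⟨k, hcond, hle2⟩
      exact ⟨|w k|, ⟨⟨k, rfl⟩, hcond⟩, hle2⟩
  rw [heq]
  apply MeasurableSet.iUnion
  intro k
  apply MeasurableSet.inter
  · have h1 : Measurable fun w : Fin m → ℝ =>
        ((1 : ℝ) + ((Finset.univ.filter fun j => w j ≤ -|w k|).card : ℝ)) /
          max ((Finset.univ.filter fun j => |w k| ≤ w j).card : ℝ) 1 := by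
      apply Measurable.div
      · exact measurable_const.add
          (meas_count_le (fun w => -|w k|) ((measurable_pi_apply k).abs.neg))
      · exact (meas_count_ge (fun w => |w k|) (measurable_pi_apply k).abs).max measurable_const
    exact measurableSet_le h1 measurable_const
  · exact measurableSet_le (measurable_pi_apply k).abs hc

lemma measurable_F1 (H0 : Finset (Fin m)) :
    Measurable fun w : Fin m → ℝ => ∑ i ∈ H0, mirrorEValue α w i := by
  apply Finset.measurable_sum
  intro i _
  unfold mirrorEValue
  apply Measurable.div
  · apply Measurable.const_mul
    exact Measurable.ite (measurableSet_thr_le α (fun w => w i) (measurable_pi_apply i))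
      measurable_const measurable_const
  · apply Measurable.const_add
    have heq : (fun w : Fin m → ℝ => ((Finset.univ.filter fun j =>
        (w j : EReal) ≤ -(mirrorThreshold α w)).card : ℝ))
        = fun w => ∑ j : Fin m, if mirrorThreshold α w ≤ ((-(w j) : ℝ) : EReal)
            then (1:ℝ) else 0 := by
      funext w
      rw [Finset.sum_boole]
      congr 1
      apply Finset.card_bij (fun a _ => a) ?_ (by intro a _ b _ h; exact h) ?_
      · intro a ha
        rw [Finset.mem_filter] at ha ⊢
        refine ⟨Finset.mem_univ _, ?_⟩
        rw [show ((-(w a) : ℝ) : EReal) = -((w a : ℝ) : EReal) from EReal.coe_neg _]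
        exact EReal.le_neg_of_le_neg ha.2
      · intro b hb
        rw [Finset.mem_filter] at hb
        refine ⟨b, Finset.mem_filter.mpr ⟨Finset.mem_univ _, ?_⟩, rfl⟩
        rw [show ((-(w b) : ℝ) : EReal) = -((w b : ℝ) : EReal) from EReal.coe_neg _] at hb
        exact EReal.le_neg_of_le_neg hb.2
    rw [heq]
    apply Finset.measurable_sum
    intro j _
    exact Measurable.ite (measurableSet_thr_le α (fun w => -(w j))
      (measurable_pi_apply j).neg) measurable_const measurable_const

lemma mirrorRejection_inter (H0 : Finset (Fin m)) (w : Fin m → ℝ) :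
    mirrorRejection α w ∩ H0 = H0.filter fun i => mirrorThreshold α w ≤ (w i : EReal) := by
  ext i
  simp only [mirrorRejection, Finset.mem_inter, Finset.mem_filter, Finset.mem_univ, true_and]
  tauto

lemma measurable_F2 (H0 : Finset (Fin m)) :
    Measurable fun w : Fin m → ℝ => ((mirrorRejection α w ∩ H0).card : ℝ) /
      max ((mirrorRejection α w).card : ℝ) 1 := by
  apply Measurable.div
  · have heq : (fun w : Fin m → ℝ => ((mirrorRejection α w ∩ H0).card : ℝ))
        = fun w => ∑ i ∈ H0, if mirrorThreshold α w ≤ ((w i : ℝ) : EReal)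
            then (1:ℝ) else 0 := by
      funext w
      rw [Finset.sum_boole, mirrorRejection_inter]
    rw [heq]
    apply Finset.measurable_sum
    intro i _
    exact Measurable.ite (measurableSet_thr_le α (fun w => w i) (measurable_pi_apply i))
      measurable_const measurable_const
  · apply Measurable.max _ measurable_const
    have heq : (fun w : Fin m → ℝ => ((mirrorRejection α w).card : ℝ))
        = fun w => ∑ i : Fin m, if mirrorThreshold α w ≤ ((w i : ℝ) : EReal)
            then (1:ℝ) else 0 := by
      funext w
      rw [Finset.sum_boole, mirrorRejection]
    rw [heq]
    apply Finset.measurable_sum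
    intro i _
    exact Measurable.ite (measurableSet_thr_le α (fun w => w i) (measurable_pi_apply i))
      measurable_const measurable_const

lemma measurable_real_sign : Measurable Real.sign := by
  have heq : Real.sign = fun r : ℝ => if r < 0 then (-1:ℝ) else if 0 < r then 1 else 0 := by
    funext r
    rfl
  rw [heq]
  exact Measurable.ite (measurableSet_lt measurable_id measurable_const) measurable_const
    (Measurable.ite (measurableSet_lt measurable_const measurable_id) measurable_const
      measurable_const)

noncomputable def gvec {m : ℕ} (p : (Fin m → ℝ) × (Fin m → ℝ)) : Fin m → ℝ :=
  fun i => Real.sign (p.2 i - p.1 i) *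
    max (Real.exp (-(p.1 i))) (Real.exp (-(p.2 i)))

lemma measurable_gvec : Measurable (gvec (m := m)) := by
  apply measurable_pi_lambda
  intro i
  apply Measurable.mul
  · exact measurable_real_sign.comp
      (((measurable_pi_apply i).comp measurable_snd).sub
        ((measurable_pi_apply i).comp measurable_fst))
  · exact Measurable.max
      (Real.measurable_exp.comp ((measurable_pi_apply i).comp measurable_fst).neg)
      (Real.measurable_exp.comp ((measurable_pi_apply i).comp measurable_snd).neg)

lemma measurable_swapSet (J : Finset (Fin m)) : Measurable (swapSet J) := by
  apply Measurable.prodMk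
  · apply measurable_pi_lambda
    intro j
    by_cases h : j ∈ J
    · simp only [swapSet, if_pos h]
      exact (measurable_pi_apply j).comp measurable_snd
    · simp only [swapSet, if_neg h]
      exact (measurable_pi_apply j).comp measurable_fst
  · apply measurable_pi_lambda
    intro j
    by_cases h : j ∈ J
    · simp only [swapSet, if_pos h]
      exact (measurable_pi_apply j).comp measurable_fst
    · simp only [swapSet, if_neg h]
      exact (measurable_pi_apply j).comp measurable_snd

end Meas

lemma swapSet_empty {m : ℕ} : swapSet (∅ : Finset (Fin m)) = id := by
  funext p
  unfold swapSet
  simp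

lemma swapSet_insert {m : ℕ} {i : Fin m} {J : Finset (Fin m)} (h : i ∉ J) :
    swapSet (insert i J) = swapSet {i} ∘ swapSet J := by
  funext p
  unfold swapSet
  simp only [Function.comp]
  refine Prod.ext ?_ ?_ <;> funext j <;> by_cases h1 : j = i <;> by_cases h2 : j ∈ J <;>
    first
      | (exact absurd h2 (h1 ▸ h))
      | simp [Finset.mem_insert, Finset.mem_singleton, h1, h2, h]

lemma gvec_ne_zero {m : ℕ} (p : (Fin m → ℝ) × (Fin m → ℝ))
    (hp : ∀ i, p.1 i ≠ p.2 i) (i : Fin m) : gvec p i ≠ 0 := by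
  unfold gvec
  apply mul_ne_zero
  · rcases (hp i).lt_or_gt with hlt | hlt
    · rw [Real.sign_of_pos (by linarith : 0 < p.2 i - p.1 i)]
      norm_num
    · rw [Real.sign_of_neg (by linarith : p.2 i - p.1 i < 0)]
      norm_num
  · exact (lt_of_lt_of_le (Real.exp_pos _) (le_max_left _ _)).ne'

lemma gvec_swap {m : ℕ} (J : Finset (Fin m)) (p : (Fin m → ℝ) × (Fin m → ℝ))
    (hp : ∀ i, p.1 i ≠ p.2 i) : gvec (swapSet J p) = flipSigns J (gvec p) := by
  funext i
  unfold gvec swapSet flipSigns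
  by_cases h : i ∈ J
  · simp only [if_pos h]
    rcases (hp i).lt_or_gt with hlt | hlt
    · rw [Real.sign_of_neg (by linarith : p.1 i - p.2 i < 0),
        Real.sign_of_pos (by linarith : 0 < p.2 i - p.1 i), max_comm]
      ring
    · rw [Real.sign_of_pos (by linarith : 0 < p.1 i - p.2 i),
        Real.sign_of_neg (by linarith : p.2 i - p.1 i < 0), max_comm]
      ring
  · simp only [if_neg h]


end SensAux

/-- **Finite-sample validity of SENS (Corollary 1).**
If the strictly positive scores `(U, U⁰)` are pairwise exchangeable at every null index
and have no ties almost surely, then the mirror e-values are exact generalized e-values,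
`E[Σ_{i∈H₀} e i] ≤ m`, and the SENS rejection set `R = {i : G i ≥ τ}` controls the FDR
at level `α`. -/
theorem sens_finite_sample_validity
    {Ω : Type*} [MeasurableSpace Ω] (P : Measure Ω) [IsProbabilityMeasure P]
    (m : ℕ) (hm : 1 ≤ m) (H0 : Finset (Fin m)) (α : ℝ) (hα : α ∈ Set.Ioo (0 : ℝ) 1)
    (U U0 : Fin m → Ω → ℝ)
    (hUmeas : ∀ i, Measurable (U i)) (hU0meas : ∀ i, Measurable (U0 i))
    (hUpos : ∀ i ω, 0 < U i ω) (hU0pos : ∀ i ω, 0 < U0 i ω)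
    -- pairwise exchangeability of (U, U⁰) at every null index
    (hexch : ∀ i ∈ H0,
      Measure.map (swapSet {i})
          (Measure.map (fun ω => (fun j => U j ω, fun j => U0 j ω)) P)
        = Measure.map (fun ω => (fun j => U j ω, fun j => U0 j ω)) P)
    -- no ties almost surely
    (hties : ∀ i, P {ω | U i ω = U0 i ω} = 0)
    (G : Fin m → Ω → ℝ)
    (hG : ∀ i ω, G i ω = Real.sign (U0 i ω - U i ω) *
      max (Real.exp (-(U i ω))) (Real.exp (-(U0 i ω)))) :
    (∫ ω, ∑ i ∈ H0, mirrorEValue α (fun k => G k ω) i ∂P) ≤ m ∧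
    (∫ ω, (((mirrorRejection α (fun k => G k ω)) ∩ H0).card : ℝ) /
        max (((mirrorRejection α (fun k => G k ω)).card : ℝ)) 1 ∂P) ≤ α := by
  obtain ⟨hα0, hα1⟩ := hα
  have hΦ : Measurable (fun ω => (fun j => U j ω, fun j => U0 j ω) :
      Ω → (Fin m → ℝ) × (Fin m → ℝ)) :=
    Measurable.prodMk (measurable_pi_lambda _ fun j => hUmeas j)
      (measurable_pi_lambda _ fun j => hU0meas j)
  set Φ : Ω → (Fin m → ℝ) × (Fin m → ℝ) :=
    fun ω => (fun j => U j ω, fun j => U0 j ω) with hΦdef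
  set ν := Measure.map Φ P with hν
  haveI : IsProbabilityMeasure ν := Measure.isProbabilityMeasure_map hΦ.aemeasurable
  set F₁ : (Fin m → ℝ) → ℝ := fun w => ∑ i ∈ H0, mirrorEValue α w i with hF₁def
  have hF₁ : Measurable F₁ := measurable_F1 α H0
  set F₂ : (Fin m → ℝ) → ℝ := fun w => ((mirrorRejection α w ∩ H0).card : ℝ) /
      max ((mirrorRejection α w).card : ℝ) 1 with hF₂def
  have hF₂ : Measurable F₂ := measurable_F2 α H0
  have hGfun : ∀ ω, (fun k => G k ω) = gvec (Φ ω) := by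
    intro ω
    funext k
    rw [hG k ω]
    rfl
  have hF₁nonneg : ∀ w, 0 ≤ F₁ w :=
    fun w => Finset.sum_nonneg fun i _ => mirrorEValue_nonneg α w i
  have hF₁bdd : ∀ w, F₁ w ≤ (m:ℝ) * m := by
    intro w
    calc F₁ w ≤ ∑ _i ∈ H0, (m:ℝ) := Finset.sum_le_sum fun i _ => mirrorEValue_le α w i
      _ = (H0.card : ℝ) * m := by rw [Finset.sum_const, nsmul_eq_mul]
      _ ≤ (m:ℝ) * m := by
          have h1 : H0.card ≤ m := le_trans (Finset.card_le_univ H0) (by simp)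
          have h2 : (H0.card : ℝ) ≤ m := by exact_mod_cast h1
          have h3 : (0:ℝ) ≤ m := by positivity
          nlinarith
  -- invariance under simultaneous swaps inside H0
  have hswap_inv : ∀ (J : Finset (Fin m)), J ⊆ H0 → Measure.map (swapSet J) ν = ν := by
    intro J
    induction J using Finset.induction_on with
    | empty =>
      intro _
      rw [swapSet_empty, Measure.map_id]
    | @insert i J hiJ ih =>
      intro hsub
      have hiH0 : i ∈ H0 := hsub (Finset.mem_insert_self i J)
      have hJsub : J ⊆ H0 := fun x hx => hsub (Finset.mem_insert_of_mem hx)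
      calc Measure.map (swapSet (insert i J)) ν
          = Measure.map (swapSet {i} ∘ swapSet J) ν := by rw [swapSet_insert hiJ]
        _ = Measure.map (swapSet {i}) (Measure.map (swapSet J) ν) :=
            (Measure.map_map (measurable_swapSet _) (measurable_swapSet _)).symm
        _ = Measure.map (swapSet {i}) ν := by rw [ih hJsub]
        _ = ν := hexch i hiH0
  -- a.e. no ties
  have hgood : ∀ᵐ (p : (Fin m → ℝ) × (Fin m → ℝ)) ∂ν, ∀ i, p.1 i ≠ p.2 i := by
    rw [ae_all_iff]
    intro i
    have hset : MeasurableSet {p : (Fin m → ℝ) × (Fin m → ℝ) | p.1 i = p.2 i} :=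
      measurableSet_eq_fun (measurable_fst.eval) (measurable_snd.eval)
    have hz : ν {p : (Fin m → ℝ) × (Fin m → ℝ) | p.1 i = p.2 i} = 0 := by
      rw [hν, Measure.map_apply hΦ hset]
      exact hties i
    rw [ae_iff]
    simpa using hz
  -- integrability
  have hint : ∀ J : Finset (Fin m), Integrable (fun p => F₁ (gvec (swapSet J p))) ν := by
    intro J
    refine (integrable_const ((m:ℝ) * m)).mono'
      ((hF₁.comp (measurable_gvec.comp (measurable_swapSet J))).aestronglyMeasurable)
      (ae_of_all _ fun p => ?_)
    rw [Real.norm_eq_abs, abs_of_nonneg (hF₁nonneg _)]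
    exact hF₁bdd _
  have hint0 : Integrable (fun p => F₁ (gvec p)) ν := by
    have := hint ∅
    simpa [swapSet_empty] using this
  -- key bound
  have hsumle : ∀ᵐ p ∂ν, ∑ J ∈ H0.powerset, F₁ (gvec (swapSet J p)) ≤ 2 ^ H0.card * m := by
    filter_upwards [hgood] with p hp
    have hre : ∀ J ∈ H0.powerset, F₁ (gvec (swapSet J p)) = F₁ (flipSigns J (gvec p)) := by
      intro J _
      rw [gvec_swap J p hp]
    rw [Finset.sum_congr rfl hre]
    exact det_flip α H0 (gvec p) (gvec_ne_zero p hp)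
  have hkey : (2 ^ H0.card : ℝ) * ∫ p, F₁ (gvec p) ∂ν ≤ (2 ^ H0.card : ℝ) * m := by
    have hJint : ∀ J ∈ H0.powerset, (∫ p, F₁ (gvec p) ∂ν)
        = ∫ p, F₁ (gvec (swapSet J p)) ∂ν := by
      intro J hJ
      calc ∫ p, F₁ (gvec p) ∂ν = ∫ p, F₁ (gvec p) ∂(Measure.map (swapSet J) ν) := by
            rw [hswap_inv J (Finset.mem_powerset.mp hJ)]
        _ = ∫ p, F₁ (gvec (swapSet J p)) ∂ν :=
            integral_map (φ := swapSet J) (f := fun p => F₁ (gvec p))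
              (measurable_swapSet J).aemeasurable
              ((hF₁.comp measurable_gvec).aestronglyMeasurable)
    calc (2 ^ H0.card : ℝ) * ∫ p, F₁ (gvec p) ∂ν
        = ∑ _J ∈ H0.powerset, ∫ p, F₁ (gvec p) ∂ν := by
          rw [Finset.sum_const, Finset.card_powerset, nsmul_eq_mul]
          push_cast
          ring
      _ = ∑ J ∈ H0.powerset, ∫ p, F₁ (gvec (swapSet J p)) ∂ν :=
          Finset.sum_congr rfl hJint
      _ = ∫ p, ∑ J ∈ H0.powerset, F₁ (gvec (swapSet J p)) ∂ν :=
          (integral_finset_sum _ fun J _ => hint J).symm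
      _ ≤ ∫ _p, ((2:ℝ) ^ H0.card * m) ∂ν :=
          integral_mono_ae (integrable_finset_sum _ fun J _ => hint J)
            (integrable_const _) hsumle
      _ = (2 ^ H0.card : ℝ) * m := by
          rw [integral_const]
          simp
  have hmain1 : ∫ p, F₁ (gvec p) ∂ν ≤ m :=
    le_of_mul_le_mul_left hkey (by positivity)
  have hchange1 : (∫ ω, ∑ i ∈ H0, mirrorEValue α (fun k => G k ω) i ∂P)
      = ∫ p, F₁ (gvec p) ∂ν := by
    have hmap1 := integral_map (μ := P) (φ := Φ) (f := fun p => F₁ (gvec p))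
      hΦ.aemeasurable ((hF₁.comp measurable_gvec).aestronglyMeasurable)
    have hfun : (fun ω => ∑ i ∈ H0, mirrorEValue α (fun k => G k ω) i)
        = fun ω => F₁ (gvec (Φ ω)) := by
      funext ω
      rw [hGfun ω]
    rw [hν, hfun]
    exact hmap1.symm
  constructor
  · rw [hchange1]
    exact hmain1
  · have hchange2 : (∫ ω, (((mirrorRejection α (fun k => G k ω)) ∩ H0).card : ℝ) /
        max (((mirrorRejection α (fun k => G k ω)).card : ℝ)) 1 ∂P)
        = ∫ p, F₂ (gvec p) ∂ν := by
      have hmap2 := integral_map (μ := P) (φ := Φ) (f := fun p => F₂ (gvec p))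
        hΦ.aemeasurable ((hF₂.comp measurable_gvec).aestronglyMeasurable)
      have hfun2 : (fun ω => (((mirrorRejection α (fun k => G k ω)) ∩ H0).card : ℝ) /
          max (((mirrorRejection α (fun k => G k ω)).card : ℝ)) 1)
          = fun ω => F₂ (gvec (Φ ω)) := by
        funext ω
        rw [hGfun ω]
      rw [hν, hfun2]
      exact hmap2.symm
    have hF₂nonneg : ∀ w, 0 ≤ F₂ w := by
      intro w
      apply div_nonneg (Nat.cast_nonneg _)
      positivity
    have hF₂bdd : ∀ w, F₂ w ≤ 1 := by
      intro w
      rw [hF₂def]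
      simp only
      rw [div_le_one (by positivity)]
      calc ((mirrorRejection α w ∩ H0).card : ℝ) ≤ ((mirrorRejection α w).card : ℝ) := by
            exact_mod_cast Finset.card_le_card Finset.inter_subset_left
        _ ≤ max ((mirrorRejection α w).card : ℝ) 1 := le_max_left _ _
    have hIntF2 : Integrable (fun p => F₂ (gvec p)) ν := by
      refine (integrable_const (1:ℝ)).mono'
        ((hF₂.comp measurable_gvec).aestronglyMeasurable) (ae_of_all _ fun p => ?_)
      rw [Real.norm_eq_abs, abs_of_nonneg (hF₂nonneg _)]
      exact hF₂bdd _
    rw [hchange2]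
    have hmpos : (0:ℝ) < m := by exact_mod_cast hm
    calc ∫ p, F₂ (gvec p) ∂ν
        ≤ ∫ p, α / m * F₁ (gvec p) ∂ν := by
          apply integral_mono hIntF2 (hint0.const_mul _)
          intro p
          exact fdp_le_evalue_sum α (gvec p) hα0 hm H0
      _ = α / m * ∫ p, F₁ (gvec p) ∂ν := integral_const_mul _ _
      _ ≤ α / m * m := mul_le_mul_of_nonneg_left hmain1 (by positivity)
      _ = α := by field_simp
end

section
/- Optimality of the oracle thresholding rule under the two-group model (Proposition 4). Let (θ_i, T_i), i ∈ [m], be i.i.d. pairs on a probability space where θ_i is Bernoulli(π) with 0 < π < 1, and conditional on θ_i = 0 (resp. θ_i = 1) the statistic T_i has Lebesgue density f₀ (resp. f₁ₘ); write f_m = (1−π)f₀ + π f₁ₘ and r_m(t) = 2 f₀(t)/(f₀(t) + f_m(t)). For a measurable decision rule δ : ℝ^m → {0,1}^m applied to T = (T_1,…,T_m), define mFDR_δ = E[ Σ_i (1−θ_i) δ_i(T) ] / E[ Σ_i δ_i(T) ] (assuming E[ Σ_i δ_i(T) ] > 0) and ETP_δ = E[ Σ_i θ_i δ_i(T) ].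 Fix α ∈ (0,1) and let 𝓓_α be the class of rules δ with mFDR_δ ≤ α. For λ ∈ (0,1) let δ^R(λ) be the rule with i-th coordinate 1{r_m(T_i) ≤ λ}, let λ^R = sup{ λ : mFDR_{δ^R(λ)} ≤ α }, and let δ^OR = δ^R(λ^R); assume mFDR_{δ^OR} = α. Then δ^OR is optimal: for every δ ∈ 𝓓_α, ETP_δ ≤ ETP_{δ^OR}. -/
/-!
Given the statistics, the label of hypothesis `i` is null with probability `lfdr (T i)`: by
independence only the `i`-th pair matters. So a rule `δ` makes `E ∑ lfdr (T i) δ i` false and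
`E ∑ (1 - lfdr (T i)) δ i` true discoveries, and as `r_m` is an increasing function of the lfdr, the
oracle rule rejects exactly where `lfdr (T i) ≤ c`. Its mFDR being `α` forces `α ≤ c`. Integrating
`(c - α) (1 - L) = (1 - c) (L - α) + (1 - α) (c - L)`, with `L = lfdr (T i)`, against the difference
of the two rules proves the claim when `α < c`. When `α = c`, comparing the two mFDRs forces every
competing rule to reject, almost surely, only where `L ≤ α`, i.e. inside the oracle rule.
-/

open MeasureTheory ProbabilityTheory
open scoped Classical ENNReal

section Marginal

variable {ι : Type*} [Fintype ι] [DecidableEq ι] {X : ι → Type*} [∀ i, MeasurableSpace (X i)]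
  [∀ i, Nonempty (X i)] {μ : ∀ i, Measure (X i)} [∀ i, SigmaFinite (μ i)]

theorem lintegral_pi_eq_of_lintegral_update_eq {f g : (∀ i, X i) → ℝ≥0∞}
    (hf : Measurable f) (hg : Measurable g) (i : ι)
    (h : ∀ x, ∫⁻ y, f (Function.update x i y) ∂μ i = ∫⁻ y, g (Function.update x i y) ∂μ i) :
    ∫⁻ x, f x ∂Measure.pi μ = ∫⁻ x, g x ∂Measure.pi μ := by
  let x₀ : ∀ i, X i := fun _ => Classical.arbitrary _
  rw [lintegral_eq_lmarginal_univ x₀, lintegral_eq_lmarginal_univ x₀,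
    lmarginal_erase' _ hf (Finset.mem_univ i), lmarginal_erase' _ hg (Finset.mem_univ i)]
  simp_rw [h]

end Marginal

section NeymanPearson

variable {X ι : Type*} [MeasurableSpace X] [Fintype ι] {μ : Measure X}

-- `E ∑ i, w i * 1{x ∈ S i}`: for the weights `1`, `lfdr` and `1 - lfdr` this is the expected number
-- of rejections, false rejections and true rejections of the rule rejecting hypothesis `i` on `S i`
noncomputable def expectedRejections (μ : Measure X) (S : ι → Set X) (w : ι → X → ℝ) : ℝ :=
  ∫ x, ∑ i, (S i).indicator (w i) x ∂μ

theorem integrable_sum_indicator {S : ι → Set X} (hS : ∀ i, MeasurableSet (S i))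
    {w : ι → X → ℝ} (hw : ∀ i, Integrable (w i) μ) :
    Integrable (fun x => ∑ i, (S i).indicator (w i) x) μ :=
  integrable_finsetSum _ fun i _ => (hw i).indicator (hS i)

theorem expectedRejections_sub_const [IsFiniteMeasure μ] {S : ι → Set X}
    (hS : ∀ i, MeasurableSet (S i)) {w : ι → X → ℝ} (hw : ∀ i, Integrable (w i) μ) (a : ℝ) :
    expectedRejections μ S (fun i x => w i x - a)
      = expectedRejections μ S w - a * expectedRejections μ S 1 := by
  rw [expectedRejections, expectedRejections, expectedRejections, ← integral_const_mul,
    ← integral_sub (integrable_sum_indicator hS hw)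
      ((integrable_sum_indicator (w := 1) hS fun _ => integrable_const 1).const_mul a)]
  refine integral_congr_ae (Filter.Eventually.of_forall fun x => ?_)
  simp only [Finset.mul_sum, ← Finset.sum_sub_distrib]
  refine Finset.sum_congr rfl fun i _ => ?_
  by_cases hx : x ∈ S i <;> simp [hx]

variable [IsFiniteMeasure μ] {L : ι → X → ℝ} {A : ι → Set X} {α c : ℝ}

theorem expectedRejections_one_sub_le_of_lt (hL : ∀ i, Integrable (L i) μ)
    (hLm : ∀ i, Measurable (L i)) (hA : ∀ i, MeasurableSet (A i))
    (hαc : α < c) (hc : c ≤ 1) (hα : α ≤ 1)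
    (hAα : expectedRejections μ A (fun i x => L i x - α) ≤ 0)
    (hBα : 0 ≤ expectedRejections μ (fun i => {x | L i x ≤ c}) (fun i x => L i x - α)) :
    expectedRejections μ A (fun i x => 1 - L i x)
      ≤ expectedRejections μ (fun i => {x | L i x ≤ c}) (fun i x => 1 - L i x) := by
  have hB : ∀ i, MeasurableSet {x | L i x ≤ c} := fun i => measurableSet_le (hLm i) measurable_const
  have hLα : ∀ i, Integrable (fun x => L i x - α) μ := fun i => (hL i).sub (integrable_const α)
  have hcL : ∀ i, Integrable (fun x => c - L i x) μ := fun i => (integrable_const c).sub (hL i)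
  have key : ∀ S : ι → Set X, (∀ i, MeasurableSet (S i)) →
      (c - α) * expectedRejections μ S (fun i x => 1 - L i x)
        = (1 - c) * expectedRejections μ S (fun i x => L i x - α)
          + (1 - α) * expectedRejections μ S (fun i x => c - L i x) := by
    intro S hS
    rw [expectedRejections, expectedRejections, expectedRejections, ← integral_const_mul,
      ← integral_const_mul, ← integral_const_mul, ← integral_add
        ((integrable_sum_indicator hS hLα).const_mul _)
        ((integrable_sum_indicator hS hcL).const_mul _)]
    refine integral_congr_ae (Filter.Eventually.of_forall fun x => ?_)
    simp only [Finset.mul_sum, ← Finset.sum_add_distrib]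
    refine Finset.sum_congr rfl fun i _ => ?_
    by_cases hx : x ∈ S i
    · simp only [Set.indicator_of_mem hx]
      ring
    · simp only [Set.indicator_of_notMem hx]
      ring
  have hG : expectedRejections μ A (fun i x => c - L i x)
      ≤ expectedRejections μ (fun i => {x | L i x ≤ c}) (fun i x => c - L i x) := by
    refine integral_mono (integrable_sum_indicator hA hcL) (integrable_sum_indicator hB hcL)
      fun x => Finset.sum_le_sum fun i _ => ?_
    have hset : {x | L i x ≤ c} = {x | 0 ≤ c - L i x} := by ext; simp
    simp only [hset]
    exact Set.indicator_le_indicator_nonneg _ _ x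
  refine le_of_mul_le_mul_left ?_ (sub_pos.2 hαc)
  rw [key A hA, key _ hB]
  gcongr ?_ + ?_
  · exact mul_le_mul_of_nonneg_left (hAα.trans hBα) (sub_nonneg.2 hc)
  · exact mul_le_mul_of_nonneg_left hG (sub_nonneg.2 hα)

theorem expectedRejections_one_sub_le_of_eq (hL : ∀ i, Integrable (L i) μ)
    (hLm : ∀ i, Measurable (L i)) (hA : ∀ i, MeasurableSet (A i)) (hα : α < 1)
    (hAα : expectedRejections μ A (fun i x => L i x - α) ≤ 0)
    (hBα : 0 ≤ expectedRejections μ (fun i => {x | L i x ≤ α}) (fun i x => L i x - α)) :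
    expectedRejections μ A (fun i x => 1 - L i x)
      ≤ expectedRejections μ (fun i => {x | L i x ≤ α}) (fun i x => 1 - L i x) := by
  have hB : ∀ i, MeasurableSet {x | L i x ≤ α} := fun i => measurableSet_le (hLm i) measurable_const
  have hLα : ∀ i, Integrable (fun x => L i x - α) μ := fun i => (hL i).sub (integrable_const α)
  have hL1 : ∀ i, Integrable (fun x => 1 - L i x) μ := fun i => (integrable_const 1).sub (hL i)
  set d : ι → X → ℝ := fun i x =>
    {x | L i x ≤ α}.indicator (fun x => L i x - α) x - (A i).indicator (fun x => L i x - α) x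
  have hd_nonpos : ∀ i x, d i x ≤ 0 := fun i x => by
    have hset : {x | L i x ≤ α} = {x | L i x - α ≤ 0} := by ext; simp
    simp only [d, hset, sub_nonpos]
    exact Set.indicator_nonpos_le_indicator _ _ x
  have hd_sum_nonpos : ∀ x, ∑ i, d i x ≤ 0 := fun x => Finset.sum_nonpos fun i _ => hd_nonpos i x
  have hd_int : Integrable (fun x => ∑ i, d i x) μ := integrable_finsetSum _ fun i _ =>
    ((hLα i).indicator (hB i)).sub ((hLα i).indicator (hA i))
  -- `d ≤ 0` pointwise, while its integral is `≥ 0`, so `d = 0` almost everywhere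
  have hd_ae : ∀ᵐ x ∂μ, ∑ i, d i x = 0 := by
    have h0 : ∫ x, -∑ i, d i x ∂μ = 0 := by
      refine le_antisymm ?_ (integral_nonneg fun x => neg_nonneg.2 (hd_sum_nonpos x))
      rw [integral_neg, neg_nonpos]
      simp only [d, Finset.sum_sub_distrib]
      rw [integral_sub (integrable_sum_indicator hB hLα) (integrable_sum_indicator hA hLα),
        sub_nonneg]
      exact hAα.trans hBα
    filter_upwards [(integral_eq_zero_iff_of_nonneg (fun x => neg_nonneg.2 (hd_sum_nonpos x))
      hd_int.neg).1 h0] with x hx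
    simpa using hx
  refine integral_mono_ae (integrable_sum_indicator hA hL1) (integrable_sum_indicator hB hL1) ?_
  filter_upwards [hd_ae] with x hx
  refine Finset.sum_le_sum fun i _ => ?_
  have hdi : d i x = 0 :=
    (Finset.sum_eq_zero_iff_of_nonpos fun j _ => hd_nonpos j x).1 hx i (Finset.mem_univ i)
  by_cases hxA : x ∈ A i
  · have hxB : L i x ≤ α := by
      by_contra hxB
      simp only [d, Set.indicator_of_mem hxA,
        Set.indicator_of_notMem (show x ∉ {x | L i x ≤ α} from hxB)] at hdi
      linarith
    rw [Set.indicator_of_mem hxA, Set.indicator_of_mem (show x ∈ {x | L i x ≤ α} from hxB)]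
  · rw [Set.indicator_of_notMem hxA]
    exact Set.indicator_nonneg (fun y hy => sub_nonneg.2 (le_trans hy hα.le)) x

theorem expectedRejections_one_sub_le_of_div_le (hL : ∀ i, Integrable (L i) μ)
    (hLm : ∀ i, Measurable (L i)) (hA : ∀ i, MeasurableSet (A i))
    (hα0 : α ≠ 0) (hα1 : α < 1) (hc : c ≤ 1)
    (hRA : 0 < expectedRejections μ A 1)
    (hAα : expectedRejections μ A L / expectedRejections μ A 1 ≤ α)
    (hBα : expectedRejections μ (fun i => {x | L i x ≤ c}) L
      / expectedRejections μ (fun i => {x | L i x ≤ c}) 1 = α) :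
    expectedRejections μ A (fun i x => 1 - L i x)
      ≤ expectedRejections μ (fun i => {x | L i x ≤ c}) (fun i x => 1 - L i x) := by
  have hB : ∀ i, MeasurableSet {x | L i x ≤ c} := fun i => measurableSet_le (hLm i) measurable_const
  have hRB : 0 < expectedRejections μ (fun i => {x | L i x ≤ c}) 1 := by
    refine lt_of_le_of_ne (integral_nonneg fun x => Finset.sum_nonneg fun i _ =>
      Set.indicator_nonneg (fun _ _ => zero_le_one) x) fun h => hα0 ?_
    rw [← hBα, ← h, div_zero]
  have hVB := (div_eq_iff hRB.ne').1 hBα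
  have hAα' : expectedRejections μ A (fun i x => L i x - α) ≤ 0 := by
    rw [expectedRejections_sub_const hA hL, sub_nonpos]
    exact (div_le_iff₀ hRA).1 hAα
  have hBα' : 0 ≤ expectedRejections μ (fun i => {x | L i x ≤ c}) (fun i x => L i x - α) := by
    rw [expectedRejections_sub_const hB hL, hVB, sub_self]
  have hαc : α ≤ c := by
    have hBc : expectedRejections μ (fun i => {x | L i x ≤ c}) (fun i x => L i x - c) ≤ 0 :=
      integral_nonpos fun x => Finset.sum_nonpos fun i _ =>
        Set.indicator_nonpos (fun x hx => sub_nonpos.2 hx) x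
    rw [expectedRejections_sub_const hB hL, hVB, sub_nonpos] at hBc
    exact le_of_mul_le_mul_right hBc hRB
  rcases hαc.lt_or_eq with hαc | rfl
  · exact expectedRejections_one_sub_le_of_lt hL hLm hA hαc hc hα1.le hAα' hBα'
  · exact expectedRejections_one_sub_le_of_eq hL hLm hA hα1 hAα' hBα'

end NeymanPearson

section TwoGroupModel

variable (pi : ℝ) (f₀ f₁ : ℝ → ℝ)

noncomputable def twoGroupLaw : Measure (Bool × ℝ) :=
  ENNReal.ofReal (1 - pi) •
    (Measure.dirac false).prod ((volume : Measure ℝ).withDensity fun t => ENNReal.ofReal (f₀ t)) +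
  ENNReal.ofReal pi •
    (Measure.dirac true).prod ((volume : Measure ℝ).withDensity fun t => ENNReal.ofReal (f₁ t))

-- `0 / 0 = 0` where the mixture density `(1 - pi) * f₀ + pi * f₁` vanishes
noncomputable def lfdr (t : ℝ) : ℝ :=
  (1 - pi) * f₀ t / ((1 - pi) * f₀ t + pi * f₁ t)

noncomputable def oracleScore (t : ℝ) : ℝ :=
  2 * f₀ t / (f₀ t + ((1 - pi) * f₀ t + pi * f₁ t))

noncomputable def labelPosterior : Bool → ℝ → ℝ
  | false => lfdr pi f₀ f₁
  | true => fun t => 1 - lfdr pi f₀ f₁ t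

-- `ENNReal.ofReal r` is by definition the coercion of `r.toNNReal`
instance : SigmaFinite (twoGroupLaw pi f₀ f₁) :=
  inferInstanceAs <| SigmaFinite <|
    (1 - pi).toNNReal •
      (Measure.dirac false).prod ((volume : Measure ℝ).withDensity fun t => ENNReal.ofReal (f₀ t)) +
    pi.toNNReal •
      (Measure.dirac true).prod ((volume : Measure ℝ).withDensity fun t => ENNReal.ofReal (f₁ t))

variable {pi f₀ f₁}

theorem lintegral_twoGroupLaw (hf₀ : Measurable f₀) (hf₁ : Measurable f₁)
    (hpi0 : 0 ≤ pi) (hpi1 : pi ≤ 1) {F : Bool × ℝ → ℝ≥0∞} (hF : Measurable F) :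
    ∫⁻ p, F p ∂twoGroupLaw pi f₀ f₁
      = ∫⁻ t, ENNReal.ofReal ((1 - pi) * f₀ t) * F (false, t)
          + ENNReal.ofReal (pi * f₁ t) * F (true, t) := by
  have hF' : ∀ b, Measurable fun t => F (b, t) := fun b => hF.comp measurable_prodMk_left
  rw [twoGroupLaw, lintegral_add_measure, lintegral_smul_measure, lintegral_smul_measure,
    Measure.dirac_prod, Measure.dirac_prod, lintegral_map hF measurable_prodMk_left,
    lintegral_map hF measurable_prodMk_left,
    lintegral_withDensity_eq_lintegral_mul _ hf₀.ennreal_ofReal (hF' false),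
    lintegral_withDensity_eq_lintegral_mul _ hf₁.ennreal_ofReal (hF' true)]
  simp only [Pi.mul_apply, smul_eq_mul]
  rw [← lintegral_const_mul' _ _ ENNReal.ofReal_ne_top,
    ← lintegral_const_mul' _ _ ENNReal.ofReal_ne_top,
    ← lintegral_add_left (by fun_prop)]
  simp only [ENNReal.ofReal_mul (sub_nonneg.2 hpi1), ENNReal.ofReal_mul hpi0, mul_assoc]

theorem mixture_mul_labelPosterior {t : ℝ} (hf₀ : 0 ≤ f₀ t) (hf₁ : 0 ≤ f₁ t) (hpi0 : 0 ≤ pi)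
    (hpi1 : pi ≤ 1) (b : Bool) :
    ((1 - pi) * f₀ t + pi * f₁ t) * labelPosterior pi f₀ f₁ b t
      = if b then pi * f₁ t else (1 - pi) * f₀ t := by
  have h0 : 0 ≤ (1 - pi) * f₀ t := mul_nonneg (sub_nonneg.2 hpi1) hf₀
  have h1 : 0 ≤ pi * f₁ t := mul_nonneg hpi0 hf₁
  have hL : ((1 - pi) * f₀ t + pi * f₁ t) * lfdr pi f₀ f₁ t = (1 - pi) * f₀ t := by
    rw [lfdr, mul_comm]
    exact div_mul_cancel_of_imp fun h => by linarith
  cases b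
  · exact hL
  · simp only [labelPosterior, if_true]
    linear_combination (-1 : ℝ) * hL

theorem measurable_lfdr (hf₀ : Measurable f₀) (hf₁ : Measurable f₁) :
    Measurable (lfdr pi f₀ f₁) := by
  unfold lfdr
  fun_prop

theorem measurable_labelPosterior (hf₀ : Measurable f₀) (hf₁ : Measurable f₁) (b : Bool) :
    Measurable (labelPosterior pi f₀ f₁ b) := by
  cases b
  · exact measurable_lfdr hf₀ hf₁
  · exact measurable_const.sub (measurable_lfdr hf₀ hf₁)

theorem lintegral_twoGroupLaw_ite_fst_eq (hf₀ : Measurable f₀) (hf₁ : Measurable f₁)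
    (hf₀nn : ∀ t, 0 ≤ f₀ t) (hf₁nn : ∀ t, 0 ≤ f₁ t) (hpi0 : 0 ≤ pi) (hpi1 : pi ≤ 1) (b : Bool)
    {H : ℝ → ℝ≥0∞} (hH : Measurable H) :
    ∫⁻ p, (if p.1 = b then H p.2 else 0) ∂twoGroupLaw pi f₀ f₁
      = ∫⁻ p, ENNReal.ofReal (labelPosterior pi f₀ f₁ b p.2) * H p.2 ∂twoGroupLaw pi f₀ f₁ := by
  have hpost := measurable_labelPosterior (pi := pi) hf₀ hf₁ b
  have hite : Measurable fun p : Bool × ℝ => if p.1 = b then H p.2 else 0 :=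
    Measurable.ite (measurable_fst (measurableSet_singleton b)) (hH.comp measurable_snd)
      measurable_const
  rw [lintegral_twoGroupLaw hf₀ hf₁ hpi0 hpi1 hite,
    lintegral_twoGroupLaw hf₀ hf₁ hpi0 hpi1 (by fun_prop)]
  refine lintegral_congr fun t => ?_
  have h0 : 0 ≤ (1 - pi) * f₀ t := mul_nonneg (sub_nonneg.2 hpi1) (hf₀nn t)
  have h1 : 0 ≤ pi * f₁ t := mul_nonneg hpi0 (hf₁nn t)
  calc _ = ENNReal.ofReal (if b then pi * f₁ t else (1 - pi) * f₀ t) * H t := by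
        cases b <;> simp
    _ = ENNReal.ofReal (((1 - pi) * f₀ t + pi * f₁ t) * labelPosterior pi f₀ f₁ b t) * H t := by
        rw [mixture_mul_labelPosterior (hf₀nn t) (hf₁nn t) hpi0 hpi1]
    _ = _ := by
        rw [ENNReal.ofReal_mul (add_nonneg h0 h1), ENNReal.ofReal_add h0 h1]
        ring

theorem lfdr_mem_Icc {t : ℝ} (hf₀ : 0 ≤ f₀ t) (hf₁ : 0 ≤ f₁ t) (hpi0 : 0 ≤ pi) (hpi1 : pi ≤ 1) :
    lfdr pi f₀ f₁ t ∈ Set.Icc 0 1 := by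
  have h0 : 0 ≤ (1 - pi) * f₀ t := mul_nonneg (sub_nonneg.2 hpi1) hf₀
  have h1 : 0 ≤ pi * f₁ t := mul_nonneg hpi0 hf₁
  exact ⟨div_nonneg h0 (add_nonneg h0 h1),
    div_le_one_of_le₀ (le_add_of_nonneg_right h1) (add_nonneg h0 h1)⟩

theorem labelPosterior_mem_Icc {t : ℝ} (hf₀ : 0 ≤ f₀ t) (hf₁ : 0 ≤ f₁ t) (hpi0 : 0 ≤ pi)
    (hpi1 : pi ≤ 1) (b : Bool) : labelPosterior pi f₀ f₁ b t ∈ Set.Icc 0 1 := by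
  have h := lfdr_mem_Icc hf₀ hf₁ hpi0 hpi1
  cases b
  · exact h
  · exact ⟨sub_nonneg.2 h.2, sub_le_self _ h.1⟩

theorem oracleScore_le_iff {t lam : ℝ} (hf₀ : 0 ≤ f₀ t) (hf₁ : 0 ≤ f₁ t) (hpi0 : 0 ≤ pi)
    (hpi1 : pi < 1) (hlam0 : 0 ≤ lam) (hlam2 : lam < 2) :
    oracleScore pi f₀ f₁ t ≤ lam ↔ lfdr pi f₀ f₁ t ≤ (1 - pi) * lam / (2 - lam) := by
  have h0 : 0 ≤ (1 - pi) * f₀ t := mul_nonneg (sub_nonneg.2 hpi1.le) hf₀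
  have h1 : 0 ≤ pi * f₁ t := mul_nonneg hpi0 hf₁
  rcases (add_nonneg h0 h1).eq_or_lt with hs | hs
  · have hf₀0 : f₀ t = 0 := by nlinarith
    simp only [oracleScore, lfdr, hf₀0, mul_zero, zero_div, hlam0, true_iff]
    exact div_nonneg (mul_nonneg (sub_nonneg.2 hpi1.le) hlam0) (by linarith)
  · unfold oracleScore lfdr
    rw [div_le_iff₀ (by linarith), div_le_div_iff₀ hs (by linarith)]
    constructor
    · intro h
      nlinarith [mul_le_mul_of_nonneg_left h (sub_nonneg.2 hpi1.le)]
    · intro h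
      have h' : (1 - pi) * (f₀ t * (2 - lam))
          ≤ (1 - pi) * (lam * ((1 - pi) * f₀ t + pi * f₁ t)) := by
        linarith
      nlinarith [le_of_mul_le_mul_left h' (sub_pos.2 hpi1)]

theorem integrable_labelPosterior_apply (hf₀ : Measurable f₀) (hf₁ : Measurable f₁)
    (hf₀nn : ∀ t, 0 ≤ f₀ t) (hf₁nn : ∀ t, 0 ≤ f₁ t) (hpi0 : 0 ≤ pi) (hpi1 : pi ≤ 1) (b : Bool)
    {ι : Type*} (i : ι) {μ : Measure (ι → Bool × ℝ)} [IsFiniteMeasure μ] :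
    Integrable (fun x => labelPosterior pi f₀ f₁ b (x i).2) μ := by
  refine Integrable.of_bound
    ((measurable_labelPosterior hf₀ hf₁ b).comp (measurable_pi_apply i).snd).aestronglyMeasurable 1
    (ae_of_all _ fun x => ?_)
  have h := labelPosterior_mem_Icc (hf₀nn (x i).2) (hf₁nn (x i).2) hpi0 hpi1 b
  rw [Real.norm_eq_abs, abs_le]
  exact ⟨by linarith [h.1], h.2⟩

end TwoGroupModel

section ProductModel

variable {pi : ℝ} {f₀ f₁ : ℝ → ℝ} {ι : Type*} [Fintype ι]

theorem lintegral_pi_twoGroupLaw_ite_fst_eq (hf₀ : Measurable f₀)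
    (hf₁ : Measurable f₁) (hf₀nn : ∀ t, 0 ≤ f₀ t) (hf₁nn : ∀ t, 0 ≤ f₁ t) (hpi0 : 0 ≤ pi)
    (hpi1 : pi ≤ 1) (i : ι) (b : Bool) {g : (ι → ℝ) → ℝ≥0∞} (hg : Measurable g) :
    ∫⁻ x, (if (x i).1 = b then g (fun k => (x k).2) else 0)
        ∂(Measure.pi fun _ => twoGroupLaw pi f₀ f₁)
      = ∫⁻ x, ENNReal.ofReal (labelPosterior pi f₀ f₁ b (x i).2) * g (fun k => (x k).2)
        ∂(Measure.pi fun _ => twoGroupLaw pi f₀ f₁) := by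
  have hpost := measurable_labelPosterior (pi := pi) hf₀ hf₁ b
  have hite : Measurable fun x : ι → Bool × ℝ => if (x i).1 = b then g (fun k => (x k).2) else 0 :=
    Measurable.ite ((measurable_pi_apply i).fst (measurableSet_singleton b)) (by fun_prop)
      measurable_const
  refine lintegral_pi_eq_of_lintegral_update_eq hite (by fun_prop) i fun x => ?_
  have hupd : ∀ y : Bool × ℝ,
      (fun k => (Function.update x i y k).2) = Function.update (fun k => (x k).2) i y.2 := by
    intro y
    ext k
    by_cases hk : k = i
    · subst hk; simp
    · simp [hk]
  simp only [Function.update_self, hupd]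
  exact lintegral_twoGroupLaw_ite_fst_eq hf₀ hf₁ hf₀nn hf₁nn hpi0 hpi1 b
    (hg.comp (measurable_update _))

theorem integral_pi_twoGroupLaw_ite_fst_eq (hf₀ : Measurable f₀)
    (hf₁ : Measurable f₁) (hf₀nn : ∀ t, 0 ≤ f₀ t) (hf₁nn : ∀ t, 0 ≤ f₁ t) (hpi0 : 0 ≤ pi)
    (hpi1 : pi ≤ 1) (i : ι) (b : Bool) {S : Set (ι → ℝ)} (hS : MeasurableSet S) :
    ∫ x, (if (x i).1 = b ∧ (fun k => (x k).2) ∈ S then (1 : ℝ) else 0)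
        ∂(Measure.pi fun _ => twoGroupLaw pi f₀ f₁)
      = ∫ x, {x : ι → Bool × ℝ | (fun k => (x k).2) ∈ S}.indicator
          (fun x => labelPosterior pi f₀ f₁ b (x i).2) x
        ∂(Measure.pi fun _ => twoGroupLaw pi f₀ f₁) := by
  have hpost : ∀ t, labelPosterior pi f₀ f₁ b t ∈ Set.Icc 0 1 :=
    fun t => labelPosterior_mem_Icc (hf₀nn t) (hf₁nn t) hpi0 hpi1 b
  have hsnd : Measurable fun (x : ι → Bool × ℝ) k => (x k).2 := by fun_prop
  have hlabel : MeasurableSet {x : ι → Bool × ℝ | (x i).1 = b} :=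
    (measurable_pi_apply i).fst (measurableSet_singleton b)
  have hite : Measurable fun x : ι → Bool × ℝ =>
      if (x i).1 = b ∧ (fun k => (x k).2) ∈ S then (1 : ℝ) else 0 :=
    Measurable.ite (hlabel.inter (hsnd hS)) measurable_const measurable_const
  have hind : Measurable ({x : ι → Bool × ℝ | (fun k => (x k).2) ∈ S}.indicator
      fun x => labelPosterior pi f₀ f₁ b (x i).2) :=
    ((measurable_labelPosterior hf₀ hf₁ b).comp (measurable_pi_apply i).snd).indicator (hsnd hS)
  rw [integral_eq_lintegral_of_nonneg_ae (ae_of_all _ fun x => by split_ifs <;> norm_num)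
      hite.aestronglyMeasurable,
    integral_eq_lintegral_of_nonneg_ae
      (ae_of_all _ fun x => Set.indicator_nonneg (fun x _ => (hpost _).1) x)
      hind.aestronglyMeasurable]
  congr 1
  calc _ = ∫⁻ x, (if (x i).1 = b then S.indicator 1 (fun k => (x k).2) else 0)
        ∂(Measure.pi fun _ => twoGroupLaw pi f₀ f₁) := by
        refine lintegral_congr fun x => ?_
        by_cases hb : (x i).1 = b <;> by_cases hx : (fun k => (x k).2) ∈ S <;> simp [hb, hx]
    _ = ∫⁻ x, ENNReal.ofReal (labelPosterior pi f₀ f₁ b (x i).2) * S.indicator 1 (fun k => (x k).2)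
        ∂(Measure.pi fun _ => twoGroupLaw pi f₀ f₁) :=
      lintegral_pi_twoGroupLaw_ite_fst_eq hf₀ hf₁ hf₀nn hf₁nn hpi0 hpi1 i b
        (measurable_const.indicator hS)
    _ = _ := by
        refine lintegral_congr fun x => ?_
        by_cases hx : (fun k => (x k).2) ∈ S <;> simp [hx]

end ProductModel

section Sample

variable {pi : ℝ} {f₀ f₁ : ℝ → ℝ} {ι Ω : Type*} [Fintype ι] [MeasurableSpace Ω] {P : Measure Ω}
  {θ : ι → Ω → Bool} {T : ι → Ω → ℝ}

theorem integral_sum_ite_mem_eq_expectedRejections_one (hθ : ∀ i, Measurable (θ i))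
    (hT : ∀ i, Measurable (T i))
    (hiid : P.map (fun ω i => (θ i ω, T i ω)) = Measure.pi fun _ => twoGroupLaw pi f₀ f₁)
    (δ : (ι → ℝ) → Set ι) (hδ : ∀ i, MeasurableSet {t | i ∈ δ t}) :
    ∫ ω, ∑ i, (if i ∈ δ (fun k => T k ω) then (1 : ℝ) else 0) ∂P
      = expectedRejections (Measure.pi fun _ => twoGroupLaw pi f₀ f₁)
          (fun i => {x | i ∈ δ (fun k => (x k).2)}) 1 := by
  have hΦ : Measurable fun ω i => (θ i ω, T i ω) :=
    measurable_pi_lambda _ fun i => (hθ i).prodMk (hT i)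
  have hsnd : Measurable fun (x : ι → Bool × ℝ) k => (x k).2 := by fun_prop
  have hF : Measurable fun x : ι → Bool × ℝ =>
      ∑ i, {x : ι → Bool × ℝ | i ∈ δ (fun k => (x k).2)}.indicator
        ((1 : ι → (ι → Bool × ℝ) → ℝ) i) x :=
    Finset.measurable_sum _ fun i _ => measurable_one.indicator (hsnd (hδ i))
  rw [expectedRejections, ← hiid, integral_map hΦ.aemeasurable hF.aestronglyMeasurable]
  rfl

theorem integral_sum_ite_label_mem_eq_expectedRejections [IsFiniteMeasure P]
    (hf₀ : Measurable f₀) (hf₁ : Measurable f₁) (hf₀nn : ∀ t, 0 ≤ f₀ t) (hf₁nn : ∀ t, 0 ≤ f₁ t)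
    (hpi0 : 0 ≤ pi) (hpi1 : pi ≤ 1)
    (hθ : ∀ i, Measurable (θ i)) (hT : ∀ i, Measurable (T i))
    (hiid : P.map (fun ω i => (θ i ω, T i ω)) = Measure.pi fun _ => twoGroupLaw pi f₀ f₁)
    (b : Bool) (δ : (ι → ℝ) → Set ι) (hδ : ∀ i, MeasurableSet {t | i ∈ δ t}) :
    ∫ ω, ∑ i, (if θ i ω = b ∧ i ∈ δ (fun k => T k ω) then (1 : ℝ) else 0) ∂P
      = expectedRejections (Measure.pi fun _ => twoGroupLaw pi f₀ f₁)
          (fun i => {x | i ∈ δ (fun k => (x k).2)})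
          (fun i x => labelPosterior pi f₀ f₁ b (x i).2) := by
  have hΦ : Measurable fun ω i => (θ i ω, T i ω) :=
    measurable_pi_lambda _ fun i => (hθ i).prodMk (hT i)
  have hsnd : Measurable fun (x : ι → Bool × ℝ) k => (x k).2 := by fun_prop
  have hite : ∀ i, Measurable fun x : ι → Bool × ℝ =>
      if (x i).1 = b ∧ i ∈ δ (fun k => (x k).2) then (1 : ℝ) else 0 := fun i =>
    Measurable.ite (((measurable_pi_apply i).fst (measurableSet_singleton b)).inter (hsnd (hδ i)))
      measurable_const measurable_const
  have : IsFiniteMeasure (Measure.pi fun _ : ι => twoGroupLaw pi f₀ f₁) := hiid ▸ inferInstance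
  have hpost : ∀ i, Integrable (fun x : ι → Bool × ℝ => labelPosterior pi f₀ f₁ b (x i).2)
      (Measure.pi fun _ => twoGroupLaw pi f₀ f₁) := fun i =>
    integrable_labelPosterior_apply hf₀ hf₁ hf₀nn hf₁nn hpi0 hpi1 b i
  have hpost_ind : ∀ i, Integrable ({x : ι → Bool × ℝ | i ∈ δ (fun k => (x k).2)}.indicator
      fun x => labelPosterior pi f₀ f₁ b (x i).2) (Measure.pi fun _ => twoGroupLaw pi f₀ f₁) :=
    fun i => (hpost i).indicator (hsnd (hδ i))
  calc _ = ∫ x, ∑ i, (if (x i).1 = b ∧ i ∈ δ (fun k => (x k).2) then (1 : ℝ) else 0)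
        ∂(Measure.pi fun _ => twoGroupLaw pi f₀ f₁) := by
        rw [← hiid, integral_map hΦ.aemeasurable
          (Finset.measurable_sum _ fun i _ => hite i).aestronglyMeasurable]
    _ = _ := by
        rw [expectedRejections, integral_finsetSum _ fun i _ => ?_,
          integral_finsetSum _ fun i _ => hpost_ind i]
        · exact Finset.sum_congr rfl fun i _ =>
            integral_pi_twoGroupLaw_ite_fst_eq hf₀ hf₁ hf₀nn hf₁nn hpi0 hpi1 i b (hδ i)
        · exact Integrable.of_bound (hite i).aestronglyMeasurable 1
            (ae_of_all _ fun x => by split_ifs <;> simp)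

end Sample

theorem oracle_thresholding_optimality_general
    {Ω : Type*} [MeasurableSpace Ω] (P : Measure Ω) [IsProbabilityMeasure P]
    (m : ℕ)
    (pi : ℝ) (hpi : pi ∈ Set.Ioo (0 : ℝ) 1)
    (f₀ f₁ : ℝ → ℝ)
    (hf₀meas : Measurable f₀) (hf₁meas : Measurable f₁)
    (hf₀nn : ∀ t, 0 ≤ f₀ t) (hf₁nn : ∀ t, 0 ≤ f₁ t)
    (θ : Fin m → Ω → Bool) (T : Fin m → Ω → ℝ)
    (hθmeas : ∀ i, Measurable (θ i)) (hTmeas : ∀ i, Measurable (T i))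
    -- the pairs (θ i, T i) are i.i.d. with the two-group mixture law
    (hiid : Measure.map (fun ω => fun i => (θ i ω, T i ω)) P
      = Measure.pi fun _ : Fin m =>
          ENNReal.ofReal (1 - pi) •
            (Measure.dirac false).prod
              ((volume : Measure ℝ).withDensity fun t => ENNReal.ofReal (f₀ t)) +
          ENNReal.ofReal pi •
            (Measure.dirac true).prod
              ((volume : Measure ℝ).withDensity fun t => ENNReal.ofReal (f₁ t)))
    (α : ℝ) (hα : α ∈ Set.Ioo (0 : ℝ) 1)
    -- the oracle score r_m(t) = 2 f₀(t) / (f₀(t) + f_m(t)), f_m = (1−π) f₀ + π f₁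
    (r : ℝ → ℝ)
    (hr : ∀ t, r t = 2 * f₀ t / (f₀ t + ((1 - pi) * f₀ t + pi * f₁ t)))
    -- marginal FDR and expected number of true positives of a decision rule
    (mFDR ETP : ((Fin m → ℝ) → Set (Fin m)) → ℝ)
    (hmFDR : ∀ δ : (Fin m → ℝ) → Set (Fin m), mFDR δ =
      (∫ ω, ∑ i : Fin m,
          (if θ i ω = false ∧ i ∈ δ (fun k => T k ω) then (1 : ℝ) else 0) ∂P) /
      (∫ ω, ∑ i : Fin m,
          (if i ∈ δ (fun k => T k ω) then (1 : ℝ) else 0) ∂P))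
    (hETP : ∀ δ : (Fin m → ℝ) → Set (Fin m), ETP δ =
      ∫ ω, ∑ i : Fin m,
          (if θ i ω = true ∧ i ∈ δ (fun k => T k ω) then (1 : ℝ) else 0) ∂P)
    -- the family of oracle thresholding rules and the calibrated oracle rule
    (δR : ℝ → (Fin m → ℝ) → Set (Fin m))
    (hδR : ∀ lam t, δR lam t = {i | r (t i) ≤ lam})
    (lamR : ℝ)
    (hlamR : lamR = sSup {lam : ℝ | lam ∈ Set.Ioo (0 : ℝ) 1 ∧ mFDR (δR lam) ≤ α})
    (hOR : mFDR (δR lamR) = α)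
    -- an arbitrary competing measurable decision rule with mFDR at most α
    (δ : (Fin m → ℝ) → Set (Fin m))
    (hδmeas : ∀ i, MeasurableSet {t : Fin m → ℝ | i ∈ δ t})
    (hδpos : 0 < ∫ ω, ∑ i : Fin m,
        (if i ∈ δ (fun k => T k ω) then (1 : ℝ) else 0) ∂P)
    (hδα : mFDR δ ≤ α) :
    ETP δ ≤ ETP (δR lamR) := by
  obtain ⟨hpi0, hpi1⟩ := hpi
  obtain ⟨hα0, hα1⟩ := hα
  have hlam0 : 0 ≤ lamR := hlamR ▸ Real.sSup_nonneg fun l hl => hl.1.1.le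
  have hlam1 : lamR ≤ 1 := hlamR ▸ Real.sSup_le (fun l hl => hl.1.2.le) zero_le_one
  set c := (1 - pi) * lamR / (2 - lamR)
  have hc : c ≤ 1 := by
    rw [div_le_one (by linarith)]
    nlinarith
  have hOR_rule : δR lamR = fun t => {i | lfdr pi f₀ f₁ (t i) ≤ c} := by
    have hr' : r = oracleScore pi f₀ f₁ := funext hr
    ext t i
    rw [hδR, hr']
    exact oracleScore_le_iff (hf₀nn _) (hf₁nn _) hpi0.le hpi1 hlam0 (by linarith)
  have hOR_meas : ∀ i, MeasurableSet {t : Fin m → ℝ | i ∈ δR lamR t} := hOR_rule ▸ fun i =>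
    measurableSet_le ((measurable_lfdr hf₀meas hf₁meas).comp (measurable_pi_apply i))
      measurable_const
  have : IsFiniteMeasure (Measure.pi fun _ : Fin m => twoGroupLaw pi f₀ f₁) := hiid ▸ inferInstance
  have hlabel := integral_sum_ite_label_mem_eq_expectedRejections hf₀meas hf₁meas hf₀nn hf₁nn
    hpi0.le hpi1.le hθmeas hTmeas hiid
  have hcount := integral_sum_ite_mem_eq_expectedRejections_one hθmeas hTmeas hiid
  rw [hmFDR, hlabel false δ hδmeas, hcount δ hδmeas] at hδα
  rw [hmFDR, hlabel false _ hOR_meas, hcount _ hOR_meas, hOR_rule] at hOR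
  rw [hcount δ hδmeas] at hδpos
  rw [hETP, hETP, hlabel true δ hδmeas, hlabel true _ hOR_meas, hOR_rule]
  exact expectedRejections_one_sub_le_of_div_le
    (L := fun (i : Fin m) (x : Fin m → Bool × ℝ) => lfdr pi f₀ f₁ (x i).2)
    (fun i => integrable_labelPosterior_apply hf₀meas hf₁meas hf₀nn hf₁nn hpi0.le hpi1.le false i)
    (fun i => (measurable_lfdr hf₀meas hf₁meas).comp (measurable_pi_apply i).snd)
    (fun i => (measurable_pi_lambda _ fun k => (measurable_pi_apply k).snd) (hδmeas i))
    hα0.ne' hα1 hc hδpos hδα hOR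

/-- **Optimality of the oracle thresholding rule under the two-group model
(Proposition 4).**
Under the i.i.d. two-group mixture model — `θ i` Bernoulli(π), and given `θ i` the
statistic `T i` has density `f₀` (null) or `f₁ₘ` (alternative) — the oracle rule
`δ^OR = 1{r_m(T i) ≤ λ^R}`, calibrated so that its mFDR is exactly `α`, maximizes the
expected number of true positives among all decision rules with mFDR at most `α`. -/
theorem oracle_thresholding_optimality
    {Ω : Type*} [MeasurableSpace Ω] (P : Measure Ω) [IsProbabilityMeasure P]
    (m : ℕ) (hm : 1 ≤ m)
    (pi : ℝ) (hpi : pi ∈ Set.Ioo (0 : ℝ) 1)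
    (f₀ f₁ : ℝ → ℝ)
    (hf₀meas : Measurable f₀) (hf₁meas : Measurable f₁)
    (hf₀nn : ∀ t, 0 ≤ f₀ t) (hf₁nn : ∀ t, 0 ≤ f₁ t)
    (hf₀int : ∫ t, f₀ t = 1) (hf₁int : ∫ t, f₁ t = 1)
    (θ : Fin m → Ω → Bool) (T : Fin m → Ω → ℝ)
    (hθmeas : ∀ i, Measurable (θ i)) (hTmeas : ∀ i, Measurable (T i))
    -- the pairs (θ i, T i) are i.i.d. with the two-group mixture law
    (hiid : Measure.map (fun ω => fun i => (θ i ω, T i ω)) P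
      = Measure.pi fun _ : Fin m =>
          ENNReal.ofReal (1 - pi) •
            (Measure.dirac false).prod
              ((volume : Measure ℝ).withDensity fun t => ENNReal.ofReal (f₀ t)) +
          ENNReal.ofReal pi •
            (Measure.dirac true).prod
              ((volume : Measure ℝ).withDensity fun t => ENNReal.ofReal (f₁ t)))
    (α : ℝ) (hα : α ∈ Set.Ioo (0 : ℝ) 1)
    -- the oracle score r_m(t) = 2 f₀(t) / (f₀(t) + f_m(t)), f_m = (1−π) f₀ + π f₁
    (r : ℝ → ℝ)
    (hr : ∀ t, r t = 2 * f₀ t / (f₀ t + ((1 - pi) * f₀ t + pi * f₁ t)))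
    -- marginal FDR and expected number of true positives of a decision rule
    (mFDR ETP : ((Fin m → ℝ) → Set (Fin m)) → ℝ)
    (hmFDR : ∀ δ : (Fin m → ℝ) → Set (Fin m), mFDR δ =
      (∫ ω, ∑ i : Fin m,
          (if θ i ω = false ∧ i ∈ δ (fun k => T k ω) then (1 : ℝ) else 0) ∂P) /
      (∫ ω, ∑ i : Fin m,
          (if i ∈ δ (fun k => T k ω) then (1 : ℝ) else 0) ∂P))
    (hETP : ∀ δ : (Fin m → ℝ) → Set (Fin m), ETP δ =
      ∫ ω, ∑ i : Fin m,
          (if θ i ω = true ∧ i ∈ δ (fun k => T k ω) then (1 : ℝ) else 0) ∂P)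
    -- the family of oracle thresholding rules and the calibrated oracle rule
    (δR : ℝ → (Fin m → ℝ) → Set (Fin m))
    (hδR : ∀ lam t, δR lam t = {i | r (t i) ≤ lam})
    (lamR : ℝ)
    (hlamR : lamR = sSup {lam : ℝ | lam ∈ Set.Ioo (0 : ℝ) 1 ∧ mFDR (δR lam) ≤ α})
    (hOR : mFDR (δR lamR) = α)
    -- an arbitrary competing measurable decision rule with mFDR at most α
    (δ : (Fin m → ℝ) → Set (Fin m))
    (hδmeas : ∀ i, MeasurableSet {t : Fin m → ℝ | i ∈ δ t})
    (hδpos : 0 < ∫ ω, ∑ i : Fin m,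
        (if i ∈ δ (fun k => T k ω) then (1 : ℝ) else 0) ∂P)
    (hδα : mFDR δ ≤ α) :
    ETP δ ≤ ETP (δR lamR) :=
  oracle_thresholding_optimality_general P m pi hpi f₀ f₁ hf₀meas hf₁meas hf₀nn hf₁nn θ T hθmeas
    hTmeas hiid α hα r hr mFDR ETP hmFDR hETP δR hδR lamR hlamR hOR δ hδmeas hδpos hδα
end

section
/- L² convergence of thresholded indicator differences under convergence in probability (Lemma B.4 / lem:eta). Let (Ω, 𝓕, ℙ) be a probability space, α ∈ (0,1), λ ∈ ℝ. Let L, L⁰ be real random variables whose distributions are atomless (equivalently, ℙ(L = c) = ℙ(L⁰ = c) = 0 for every c ∈ ℝ) and satisfy ℙ(L = L⁰) = 0. Let (L̂ₙ) and (L̂ₙ⁰) be sequences of real random variables with L̂ₙ − L → 0 and L̂ₙ⁰ − L⁰ → 0 in probability as n → ∞. Define η = 1{L⁰ ≤ L}·1{L⁰ ≤ λ} − α·1{L ≤ L⁰}·1{L ≤ λ} and η̂ₙ = 1{L̂ₙ⁰ ≤ L̂ₙ}·1{L̂ₙ⁰ ≤ λ} − α·1{L̂ₙ ≤ L̂ₙ⁰}·1{L̂ₙ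 ≤ λ}. Then E[ (η̂ₙ − η)² ] → 0 as n → ∞. -/
open MeasureTheory Filter
open scoped Classical

private lemma ind_le_tendsto {a b : ℕ → ℝ} {x y : ℝ}
    (ha : Tendsto a atTop (nhds x)) (hb : Tendsto b atTop (nhds y)) (hxy : x ≠ y) :
    Tendsto (fun k => if a k ≤ b k then (1 : ℝ) else 0) atTop
      (nhds (if x ≤ y then (1 : ℝ) else 0)) := by
  rcases hxy.lt_or_gt with h | h
  · rw [if_pos h.le]
    exact tendsto_const_nhds.congr'
      ((ha.eventually_lt hb h).mono fun k hk => (if_pos hk.le).symm)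
  · rw [if_neg (not_le.mpr h)]
    exact tendsto_const_nhds.congr'
      ((hb.eventually_lt ha h).mono fun k hk => (if_neg (not_le.mpr hk)).symm)

/-- **L² convergence of thresholded indicator differences under convergence in
probability (Lemma B.4).**
If `L` and `L⁰` have atomless distributions, `ℙ(L = L⁰) = 0`, and `L̂ n → L`,
`L̂⁰ n → L⁰` in probability, then the statistics
`η = 1{L⁰ ≤ L}·1{L⁰ ≤ λ} − α·1{L ≤ L⁰}·1{L ≤ λ}` and their plug-in versions `η̂ n`
satisfy `E[(η̂ n − η)²] → 0`. -/
theorem eta_indicator_L2_convergence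
    {Ω : Type*} [MeasurableSpace Ω] (P : Measure Ω) [IsProbabilityMeasure P]
    (α lam : ℝ) (hα : α ∈ Set.Ioo (0 : ℝ) 1)
    (L L0 : Ω → ℝ) (hLmeas : Measurable L) (hL0meas : Measurable L0)
    -- atomless distributions
    (hLatomless : ∀ c : ℝ, P {ω | L ω = c} = 0)
    (hL0atomless : ∀ c : ℝ, P {ω | L0 ω = c} = 0)
    -- no ties between L and L⁰
    (hne : P {ω | L ω = L0 ω} = 0)
    (Lhat L0hat : ℕ → Ω → ℝ)
    (hLhatmeas : ∀ n, Measurable (Lhat n)) (hL0hatmeas : ∀ n, Measurable (L0hat n))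
    -- convergence in probability
    (hLconv : TendstoInMeasure P Lhat atTop L)
    (hL0conv : TendstoInMeasure P L0hat atTop L0)
    (η : Ω → ℝ)
    (hη : ∀ ω, η ω =
      (if L0 ω ≤ L ω then (1 : ℝ) else 0) * (if L0 ω ≤ lam then (1 : ℝ) else 0) -
        α * ((if L ω ≤ L0 ω then (1 : ℝ) else 0) * (if L ω ≤ lam then (1 : ℝ) else 0)))
    (ηhat : ℕ → Ω → ℝ)
    (hηhat : ∀ n ω, ηhat n ω =
      (if L0hat n ω ≤ Lhat n ω then (1 : ℝ) else 0) *
          (if L0hat n ω ≤ lam then (1 : ℝ) else 0) -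
        α * ((if Lhat n ω ≤ L0hat n ω then (1 : ℝ) else 0) *
          (if Lhat n ω ≤ lam then (1 : ℝ) else 0))) :
    Tendsto (fun n => ∫ ω, (ηhat n ω - η ω) ^ 2 ∂P) atTop (nhds 0) := by
  -- measurability of η and η̂ n
  have ind_meas : ∀ (f g : Ω → ℝ), Measurable f → Measurable g →
      Measurable (fun ω => if f ω ≤ g ω then (1 : ℝ) else 0) := by
    intro f g hf hg
    exact Measurable.ite (measurableSet_le hf hg) measurable_const measurable_const
  have hη_meas : Measurable η := by
    have : η = fun ω =>
        (if L0 ω ≤ L ω then (1 : ℝ) else 0) * (if L0 ω ≤ lam then (1 : ℝ) else 0) -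
          α * ((if L ω ≤ L0 ω then (1 : ℝ) else 0) *
            (if L ω ≤ lam then (1 : ℝ) else 0)) := funext hη
    rw [this]
    exact ((ind_meas _ _ hL0meas hLmeas).mul
        (ind_meas _ _ hL0meas measurable_const)).sub
      (((ind_meas _ _ hLmeas hL0meas).mul
        (ind_meas _ _ hLmeas measurable_const)).const_mul α)
  have hηhat_meas : ∀ n, Measurable (ηhat n) := by
    intro n
    have : ηhat n = fun ω =>
        (if L0hat n ω ≤ Lhat n ω then (1 : ℝ) else 0) *
            (if L0hat n ω ≤ lam then (1 : ℝ) else 0) -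
          α * ((if Lhat n ω ≤ L0hat n ω then (1 : ℝ) else 0) *
            (if Lhat n ω ≤ lam then (1 : ℝ) else 0)) := funext (hηhat n)
    rw [this]
    exact ((ind_meas _ _ (hL0hatmeas n) (hLhatmeas n)).mul
        (ind_meas _ _ (hL0hatmeas n) measurable_const)).sub
      (((ind_meas _ _ (hLhatmeas n) (hL0hatmeas n)).mul
        (ind_meas _ _ (hLhatmeas n) measurable_const)).const_mul α)
  -- uniform bound
  have hηhat_bdd : ∀ n ω, |ηhat n ω| ≤ 1 := by
    intro n ω
    rw [abs_le, hηhat n ω]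
    constructor <;> split_ifs <;> nlinarith [hα.1.le, hα.2.le]
  have hη_bdd : ∀ ω, |η ω| ≤ 1 := by
    intro ω
    rw [abs_le, hη ω]
    constructor <;> split_ifs <;> nlinarith [hα.1.le, hα.2.le]
  have hbound : ∀ n ω, ‖(ηhat n ω - η ω) ^ 2‖ ≤ (4 : ℝ) := by
    intro n ω
    have h1 := hηhat_bdd n ω
    have h2 := hη_bdd ω
    rw [Real.norm_eq_abs, abs_of_nonneg (sq_nonneg _)]
    have : |ηhat n ω - η ω| ≤ 2 := (abs_sub _ _).trans (by linarith)
    nlinarith [abs_nonneg (ηhat n ω - η ω), sq_abs (ηhat n ω - η ω)]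
  -- the good (full-measure) set
  have hgood : ∀ᵐ ω ∂P, L ω ≠ L0 ω ∧ L ω ≠ lam ∧ L0 ω ≠ lam := by
    have h1 : ∀ᵐ ω ∂P, L ω ≠ L0 ω := by
      rw [ae_iff]
      simpa using hne
    have h2 : ∀ᵐ ω ∂P, L ω ≠ lam := by
      rw [ae_iff]
      simpa using hLatomless lam
    have h3 : ∀ᵐ ω ∂P, L0 ω ≠ lam := by
      rw [ae_iff]
      simpa using hL0atomless lam
    filter_upwards [h1, h2, h3] with ω using fun a b c => ⟨a, b, c⟩
  -- subsequence argument
  apply tendsto_of_subseq_tendsto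
  intro ns hns
  -- Tendsto in measure along the subsequence
  have hL1 : TendstoInMeasure P (fun k => Lhat (ns k)) atTop L :=
    fun ε hε => (hLconv ε hε).comp hns
  obtain ⟨ms, hms_mono, hms_ae⟩ := hL1.exists_seq_tendsto_ae
  have hL2 : TendstoInMeasure P (fun k => L0hat (ns (ms k))) atTop L0 :=
    fun ε hε => (hL0conv ε hε).comp (hns.comp hms_mono.tendsto_atTop)
  obtain ⟨ks, hks_mono, hks_ae⟩ := hL2.exists_seq_tendsto_ae
  refine ⟨fun i => ms (ks i), ?_⟩
  -- pointwise a.e. convergence of the squared differences to 0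
  have hae : ∀ᵐ ω ∂P,
      Tendsto (fun i => (ηhat (ns (ms (ks i))) ω - η ω) ^ 2) atTop (nhds 0) := by
    filter_upwards [hgood, hms_ae, hks_ae] with ω hg hmsω hksω
    obtain ⟨hLL0, hLlam, hL0lam⟩ := hg
    have hLω : Tendsto (fun i => Lhat (ns (ms (ks i))) ω) atTop (nhds (L ω)) :=
      hmsω.comp hks_mono.tendsto_atTop
    have hL0ω : Tendsto (fun i => L0hat (ns (ms (ks i))) ω) atTop (nhds (L0 ω)) :=
      hksω
    have hηω : Tendsto (fun i => ηhat (ns (ms (ks i))) ω) atTop (nhds (η ω)) := by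
      rw [hη ω]
      simp only [hηhat]
      exact ((ind_le_tendsto hL0ω hLω (Ne.symm hLL0)).mul
          (ind_le_tendsto hL0ω tendsto_const_nhds hL0lam)).sub
        (((ind_le_tendsto hLω hL0ω hLL0).mul
          (ind_le_tendsto hLω tendsto_const_nhds hLlam)).const_mul α)
    have := ((hηω.sub tendsto_const_nhds).pow 2 :
      Tendsto (fun i => (ηhat (ns (ms (ks i))) ω - η ω) ^ 2) atTop
        (nhds ((η ω - η ω) ^ 2)))
    simpa using this
  -- dominated convergence
  have hdom := tendsto_integral_of_dominated_convergence (μ := P)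
    (F := fun i ω => (ηhat (ns (ms (ks i))) ω - η ω) ^ 2) (f := fun _ => (0 : ℝ))
    (fun _ => (4 : ℝ))
    (fun i => (((hηhat_meas _).sub hη_meas).pow_const 2).aestronglyMeasurable)
    (integrable_const 4)
    (fun i => ae_of_all _ fun ω => hbound _ ω)
    hae
  simpa using hdom
end

section
/- Density of the filtered calibration sample in the mixture case (bias-quantification formula, Supplement Section A.6). Let 0 ≤ π ≤ 1, let f₀ be a probability density on ℝ symmetric about zero (f₀(−x) = f₀(x)), let f₁ be a probability density on ℝ, and set f_mix = (1−π)f₀ + π f₁. Let F₀ and F₁ denote the cumulative distribution functions of f₀ and f₁. Let T and T⁰ be independent real random variables with densities f_mix and f₀ respectively, and define the filtered variable T̃⁰ = T if |T| ≤ |T⁰| and T̃⁰ = T⁰ otherwise. Define ξ(x) = π(1 − F₁(x) + F₁(−x)) + 2(1−π)(1 − F₀(x)). Then T̃⁰ has Lebesgue density given (for almost every x) by: f_{T̃⁰}(x) = 2(1 − F₀(x)) f_mix(x) + f₀(x) ξ(x) for x ≥ 0, and f_{T̃⁰}(x) = 2 F₀(x) f_mix(x) + f₀(x) ξ(−x)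 for x < 0. -/
open MeasureTheory ProbabilityTheory
open scoped Classical

open Set
open scoped ENNReal

/-!
On `{|T| ≤ |T⁰|}` the filtered variable is `T`, elsewhere it is `T⁰`, so by independence and
Fubini its law is `f_mix(x) ℙ(|T⁰| ≥ |x|) dx + f₀(y) ℙ(|T| > |y|) dy`. As `f₀` is even,
`F₀(-a) = 1 - F₀(a)` and `ℙ(|T⁰| ≥ a) = 2 (1 - F₀(a))`; by linearity in the mixture weights,
`ℙ(|T| > a) = ξ(a)`. For `x < 0` the first tail `2 (1 - F₀(-x))` is `2 F₀(x)`.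
-/

theorem withDensity_add_left₀ {α : Type*} [MeasurableSpace α] {μ : Measure α}
    {f : α → ℝ≥0∞} (hf : AEMeasurable f μ) (g : α → ℝ≥0∞) :
    μ.withDensity (f + g) = μ.withDensity f + μ.withDensity g := by
  ext s hs
  rw [Measure.add_apply, withDensity_apply _ hs, withDensity_apply _ hs, withDensity_apply _ hs,
    ← lintegral_add_left' hf.restrict]
  rfl

section Selection

variable {α Ω : Type*} [MeasurableSpace α] [MeasurableSpace Ω]

theorem measurable_ite_mem_fst_snd {S : Set (α × α)} (hS : MeasurableSet S) :
    Measurable fun p : α × α => if p ∈ S then p.1 else p.2 :=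
  Measurable.piecewise hS measurable_fst measurable_snd

theorem map_prod_ite_mem (μ ν : Measure α) [SFinite μ] [SFinite ν] {S : Set (α × α)}
    (hS : MeasurableSet S) :
    (μ.prod ν).map (fun p => if p ∈ S then p.1 else p.2)
      = μ.withDensity (fun x => ν (Prod.mk x ⁻¹' S))
        + ν.withDensity (fun y => μ ((·, y) ⁻¹' Sᶜ)) := by
  ext s hs
  have hpre : (fun p : α × α => if p ∈ S then p.1 else p.2) ⁻¹' s
      = S ∩ s ×ˢ univ ∪ Sᶜ ∩ univ ×ˢ s := by
    ext p
    by_cases h : p ∈ S <;> simp [h]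
  have hdisj : Disjoint (S ∩ s ×ˢ univ) (Sᶜ ∩ univ ×ˢ s) :=
    disjoint_compl_right.mono inter_subset_left inter_subset_left
  rw [Measure.map_apply (measurable_ite_mem_fst_snd hS) hs, hpre,
    measure_union hdisj (hS.compl.inter (MeasurableSet.univ.prod hs)), Measure.add_apply,
    withDensity_apply _ hs, withDensity_apply _ hs,
    ← Measure.restrict_apply hS, ← Measure.restrict_apply hS.compl, ← Measure.prod_restrict,
    ← Measure.prod_restrict, Measure.restrict_univ, Measure.restrict_univ,
    Measure.prod_apply hS, Measure.prod_apply_symm hS.compl]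

theorem ProbabilityTheory.IndepFun.map_ite_mem {P : Measure Ω} [IsFiniteMeasure P]
    {X Y : Ω → α} (hXY : IndepFun X Y P) (hX : Measurable X) (hY : Measurable Y)
    {S : Set (α × α)} (hS : MeasurableSet S) :
    P.map (fun ω => if (X ω, Y ω) ∈ S then X ω else Y ω)
      = (P.map X).withDensity (fun x => P.map Y (Prod.mk x ⁻¹' S))
        + (P.map Y).withDensity (fun y => P.map X ((·, y) ⁻¹' Sᶜ)) := by
  rw [← map_prod_ite_mem _ _ hS,
    ← (indepFun_iff_map_prod_eq_prod_map_map hX.aemeasurable hY.aemeasurable).mp hXY,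
    Measure.map_map (measurable_ite_mem_fst_snd hS) (hX.prodMk hY)]
  rfl

theorem ProbabilityTheory.IndepFun.map_ite_mem_eq_withDensity {P : Measure Ω}
    [IsFiniteMeasure P] {X Y : Ω → α} (hXY : IndepFun X Y P) (hX : Measurable X) (hY : Measurable Y)
    {S : Set (α × α)} (hS : MeasurableSet S) {ρ : Measure α} [SFinite ρ]
    {p q : α → ℝ≥0∞} (hXlaw : P.map X = ρ.withDensity p) (hYlaw : P.map Y = ρ.withDensity q)
    (hp : AEMeasurable p ρ) (hq : AEMeasurable q ρ) :
    P.map (fun ω => if (X ω, Y ω) ∈ S then X ω else Y ω)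
      = ρ.withDensity fun x => p x * ρ.withDensity q (Prod.mk x ⁻¹' S)
          + q x * ρ.withDensity p ((·, x) ⁻¹' Sᶜ) := by
  rw [hXY.map_ite_mem hX hY hS, hXlaw, hYlaw,
    ← withDensity_mul₀ hp (measurable_measure_prodMk_left hS).aemeasurable,
    ← withDensity_mul₀ hq (measurable_measure_prodMk_right hS.compl).aemeasurable,
    ← withDensity_add_left₀ (hp.mul (measurable_measure_prodMk_left hS).aemeasurable)]
  rfl

theorem ProbabilityTheory.IndepFun.map_ite_mem_eq_withDensity_ofReal {P : Measure Ω}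
    [IsFiniteMeasure P] {X Y : Ω → α} (hXY : IndepFun X Y P) (hX : Measurable X)
    (hY : Measurable Y) {S : Set (α × α)} (hS : MeasurableSet S) {ρ : Measure α} [SFinite ρ]
    {p q : α → ℝ} (hXlaw : P.map X = ρ.withDensity fun x => ENNReal.ofReal (p x))
    (hYlaw : P.map Y = ρ.withDensity fun x => ENNReal.ofReal (q x))
    (hp : AEMeasurable p ρ) (hq : AEMeasurable q ρ)
    (hp0 : ∀ x, 0 ≤ p x) (hq0 : ∀ x, 0 ≤ q x) :
    P.map (fun ω => if (X ω, Y ω) ∈ S then X ω else Y ω)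
      = ρ.withDensity fun x => ENNReal.ofReal
          (p x * (ρ.withDensity fun y => ENNReal.ofReal (q y)).real (Prod.mk x ⁻¹' S)
            + q x * (ρ.withDensity fun y => ENNReal.ofReal (p y)).real ((·, x) ⁻¹' Sᶜ)) := by
  have : IsFiniteMeasure (ρ.withDensity fun x => ENNReal.ofReal (p x)) := hXlaw ▸ inferInstance
  have : IsFiniteMeasure (ρ.withDensity fun x => ENNReal.ofReal (q x)) := hYlaw ▸ inferInstance
  rw [hXY.map_ite_mem_eq_withDensity hX hY hS hXlaw hYlaw hp.ennreal_ofReal hq.ennreal_ofReal]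
  congr 1
  ext x
  rw [← ofReal_measureReal, ← ofReal_measureReal, ← ENNReal.ofReal_mul (hp0 x),
    ← ENNReal.ofReal_mul (hq0 x), ← ENNReal.ofReal_add (mul_nonneg (hp0 x) measureReal_nonneg)
      (mul_nonneg (hq0 x) measureReal_nonneg)]

end Selection

theorem measureReal_withDensity_ofReal {α : Type*} [MeasurableSpace α] {μ : Measure α}
    [SFinite μ] {f : α → ℝ} (hf : Integrable f μ) (hf0 : 0 ≤ᵐ[μ] f) (s : Set α) :
    (μ.withDensity fun x => ENNReal.ofReal (f x)).real s = ∫ x in s, f x ∂μ := by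
  rw [measureReal_def, withDensity_apply', ← ofReal_integral_eq_lintegral_ofReal hf.restrict
    (ae_restrict_of_ae hf0), ENNReal.toReal_ofReal (setIntegral_nonneg_of_ae_restrict
    (ae_restrict_of_ae hf0))]

section AbsTail

theorem setOf_lt_abs {G : Type*} [AddCommGroup G] [LinearOrder G] [IsOrderedAddMonoid G]
    (a : G) : {y | a < |y|} = Iio (-a) ∪ Ioi a := by
  ext y
  simp only [mem_ofPred_eq, lt_abs, mem_union, mem_Iio, mem_Ioi, lt_neg]
  exact or_comm

theorem setOf_le_abs {G : Type*} [AddCommGroup G] [LinearOrder G] [IsOrderedAddMonoid G]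
    (a : G) : {y | a ≤ |y|} = Iic (-a) ∪ Ici a := by
  ext y
  simp only [mem_ofPred_eq, le_abs, mem_union, mem_Iic, mem_Ici, le_neg]
  exact or_comm

variable (μ : Measure ℝ) [IsFiniteMeasure μ] {a : ℝ}

theorem measureReal_lt_abs (ha : 0 ≤ a) :
    μ.real {y | a < |y|} = μ.real (Iio (-a)) + (μ.real univ - μ.real (Iic a)) := by
  rw [setOf_lt_abs, measureReal_union (Iio_disjoint_Ioi_of_le (by linarith)) measurableSet_Ioi,
    ← compl_Iic, measureReal_compl measurableSet_Iic]

variable [NullSingletonClass μ]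

theorem measureReal_lt_abs_of_nullSingleton (ha : 0 ≤ a) :
    μ.real {y | a < |y|} = μ.real (Iic (-a)) + (μ.real univ - μ.real (Iic a)) := by
  rw [measureReal_lt_abs μ ha, measureReal_congr Iio_ae_eq_Iic]

theorem measureReal_le_abs (ha : 0 ≤ a) :
    μ.real {y | a ≤ |y|} = μ.real (Iic (-a)) + (μ.real univ - μ.real (Iic a)) := by
  rw [← measureReal_lt_abs_of_nullSingleton μ ha, setOf_le_abs, setOf_lt_abs]
  exact measureReal_congr (Iio_ae_eq_Iic.union Ioi_ae_eq_Ici).symm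

end AbsTail

theorem Function.Even.integral_Iic_neg {f : ℝ → ℝ} (hf : f.Even) (hfi : Integrable f)
    (a : ℝ) :
    ∫ x in Iic (-a), f x = (∫ x, f x) - ∫ x in Iic a, f x := by
  rw [← setIntegral_compl measurableSet_Iic hfi, compl_Iic, ← integral_comp_neg_Ioi]
  exact setIntegral_congr_fun measurableSet_Ioi fun x _ => hf x

section DensityTail

variable {f : ℝ → ℝ} (hfi : Integrable f) (hf0 : ∀ x, 0 ≤ f x) {a : ℝ}
include hfi hf0

theorem measureReal_withDensity_lt_abs (ha : 0 ≤ a) :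
    (volume.withDensity fun x => ENNReal.ofReal (f x)).real {y | a < |y|}
      = (∫ x in Iic (-a), f x) + ((∫ x, f x) - ∫ x in Iic a, f x) := by
  have := isFiniteMeasure_withDensity_ofReal hfi.2
  have hreal := measureReal_withDensity_ofReal hfi (ae_of_all _ hf0)
  rw [measureReal_lt_abs_of_nullSingleton _ ha, hreal, hreal, hreal, setIntegral_univ]

theorem Function.Even.measureReal_withDensity_le_abs (hf : f.Even) (ha : 0 ≤ a) :
    (volume.withDensity fun x => ENNReal.ofReal (f x)).real {y | a ≤ |y|}
      = 2 * ((∫ x, f x) - ∫ x in Iic a, f x) := by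
  have := isFiniteMeasure_withDensity_ofReal hfi.2
  rw [measureReal_le_abs _ ha, ← measureReal_lt_abs_of_nullSingleton _ ha,
    measureReal_withDensity_lt_abs hfi hf0 ha, hf.integral_Iic_neg hfi]
  ring

end DensityTail

theorem filtered_sample_density_mixture_general
    {Ω : Type*} [MeasurableSpace Ω] (P : Measure Ω) [IsProbabilityMeasure P]
    (pi : ℝ) (hpi : pi ∈ Set.Icc (0 : ℝ) 1)
    (f₀ f₁ : ℝ → ℝ)
    (hf₀nn : ∀ x, 0 ≤ f₀ x) (hf₁nn : ∀ x, 0 ≤ f₁ x)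
    (hf₀int : ∫ x, f₀ x = 1) (hf₁int : ∫ x, f₁ x = 1)
    (hf₀symm : ∀ x, f₀ (-x) = f₀ x)
    (F₀ F₁ : ℝ → ℝ)
    (hF₀ : ∀ x, F₀ x = ∫ u in Set.Iic x, f₀ u)
    (hF₁ : ∀ x, F₁ x = ∫ u in Set.Iic x, f₁ u)
    (fmix : ℝ → ℝ) (hfmix : ∀ x, fmix x = (1 - pi) * f₀ x + pi * f₁ x)
    (T T0 : Ω → ℝ) (hTmeas : Measurable T) (hT0meas : Measurable T0)
    (hindep : IndepFun T T0 P)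
    (hTlaw : Measure.map T P
      = (volume : Measure ℝ).withDensity fun x => ENNReal.ofReal (fmix x))
    (hT0law : Measure.map T0 P
      = (volume : Measure ℝ).withDensity fun x => ENNReal.ofReal (f₀ x))
    (Ttilde : Ω → ℝ)
    (hTtilde : ∀ ω, Ttilde ω = if |T ω| ≤ |T0 ω| then T ω else T0 ω)
    (ξ : ℝ → ℝ)
    (hξ : ∀ x, ξ x = pi * (1 - F₁ x + F₁ (-x)) + 2 * (1 - pi) * (1 - F₀ x)) :
    Measure.map Ttilde P
      = (volume : Measure ℝ).withDensity fun x => ENNReal.ofReal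
          (if 0 ≤ x then 2 * (1 - F₀ x) * fmix x + f₀ x * ξ x
           else 2 * F₀ x * fmix x + f₀ x * ξ (-x)) := by
  have hf₀i : Integrable f₀ := .of_integral_ne_zero (by simp [hf₀int])
  have hf₁i : Integrable f₁ := .of_integral_ne_zero (by simp [hf₁int])
  have hfmix_nonneg (x : ℝ) : 0 ≤ fmix x := by
    rw [hfmix]
    exact add_nonneg (mul_nonneg (sub_nonneg.2 hpi.2) (hf₀nn x)) (mul_nonneg hpi.1 (hf₁nn x))
  have hfmixi : Integrable fmix := by
    rw [show fmix = _ from funext hfmix]; exact (hf₀i.const_mul _).add (hf₁i.const_mul _)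
  have hfmix_integral (μ : Measure ℝ) (hμ : μ ≤ volume) :
      ∫ x, fmix x ∂μ = (1 - pi) * (∫ x, f₀ x ∂μ) + pi * ∫ x, f₁ x ∂μ := by
    simp_rw [hfmix]
    rw [integral_add ((hf₀i.mono_measure hμ).const_mul _) ((hf₁i.mono_measure hμ).const_mul _),
      integral_const_mul, integral_const_mul]
  have hsymm (a : ℝ) : F₀ (-a) = 1 - F₀ a := by
    rw [hF₀, hF₀, Function.Even.integral_Iic_neg hf₀symm hf₀i, hf₀int]
  have hS : MeasurableSet {p : ℝ × ℝ | |p.1| ≤ |p.2|} :=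
    measurableSet_le measurable_fst.abs measurable_snd.abs
  rw [show Ttilde = fun ω => if (T ω, T0 ω) ∈ {p : ℝ × ℝ | |p.1| ≤ |p.2|} then T ω else T0 ω
      from funext hTtilde, hindep.map_ite_mem_eq_withDensity_ofReal hTmeas hT0meas hS hTlaw
      hT0law hfmixi.1.aemeasurable hf₀i.1.aemeasurable hfmix_nonneg hf₀nn]
  congr 1 with x
  congr 1
  have hcompl : (·, x) ⁻¹' {p : ℝ × ℝ | |p.1| ≤ |p.2|}ᶜ = {y | |x| < |y|} := by
    ext y; simp [not_le]
  rw [hcompl, show Prod.mk x ⁻¹' {p : ℝ × ℝ | |p.1| ≤ |p.2|} = {y | |x| ≤ |y|} from rfl,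
    Function.Even.measureReal_withDensity_le_abs hf₀i hf₀nn hf₀symm (abs_nonneg x),
    measureReal_withDensity_lt_abs hfmixi hfmix_nonneg (abs_nonneg x),
    hfmix_integral _ Measure.restrict_le_self, hfmix_integral _ Measure.restrict_le_self,
    hfmix_integral _ le_rfl, hf₀int, hf₁int, ← hF₀, ← hF₀, ← hF₁, ← hF₁]
  rcases le_or_gt 0 x with hx | hx
  · simp only [if_pos hx, abs_of_nonneg hx, hξ, hsymm]; ring
  · simp only [if_neg hx.not_ge, abs_of_neg hx, hξ, hsymm, neg_neg]; ring

/-- **Density of the filtered calibration sample in the mixture case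
(bias-quantification formula, Supplement Section A.6).**
If `T ∼ f_mix = (1−π) f₀ + π f₁` and `T⁰ ∼ f₀` are independent, `f₀` symmetric about
zero, and `T̃⁰ = T` when `|T| ≤ |T⁰|` and `T̃⁰ = T⁰` otherwise, then `T̃⁰` has Lebesgue
density `2(1 − F₀(x)) f_mix(x) + f₀(x) ξ(x)` for `x ≥ 0` and
`2 F₀(x) f_mix(x) + f₀(x) ξ(−x)` for `x < 0`, where
`ξ(x) = π(1 − F₁(x) + F₁(−x)) + 2(1−π)(1 − F₀(x))`. -/
theorem filtered_sample_density_mixture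
    {Ω : Type*} [MeasurableSpace Ω] (P : Measure Ω) [IsProbabilityMeasure P]
    (pi : ℝ) (hpi : pi ∈ Set.Icc (0 : ℝ) 1)
    (f₀ f₁ : ℝ → ℝ)
    (hf₀meas : Measurable f₀) (hf₁meas : Measurable f₁)
    (hf₀nn : ∀ x, 0 ≤ f₀ x) (hf₁nn : ∀ x, 0 ≤ f₁ x)
    (hf₀int : ∫ x, f₀ x = 1) (hf₁int : ∫ x, f₁ x = 1)
    (hf₀symm : ∀ x, f₀ (-x) = f₀ x)
    (F₀ F₁ : ℝ → ℝ)
    (hF₀ : ∀ x, F₀ x = ∫ u in Set.Iic x, f₀ u)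
    (hF₁ : ∀ x, F₁ x = ∫ u in Set.Iic x, f₁ u)
    (fmix : ℝ → ℝ) (hfmix : ∀ x, fmix x = (1 - pi) * f₀ x + pi * f₁ x)
    (T T0 : Ω → ℝ) (hTmeas : Measurable T) (hT0meas : Measurable T0)
    (hindep : IndepFun T T0 P)
    (hTlaw : Measure.map T P
      = (volume : Measure ℝ).withDensity fun x => ENNReal.ofReal (fmix x))
    (hT0law : Measure.map T0 P
      = (volume : Measure ℝ).withDensity fun x => ENNReal.ofReal (f₀ x))
    (Ttilde : Ω → ℝ)
    (hTtilde : ∀ ω, Ttilde ω = if |T ω| ≤ |T0 ω| then T ω else T0 ω)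
    (ξ : ℝ → ℝ)
    (hξ : ∀ x, ξ x = pi * (1 - F₁ x + F₁ (-x)) + 2 * (1 - pi) * (1 - F₀ x)) :
    Measure.map Ttilde P
      = (volume : Measure ℝ).withDensity fun x => ENNReal.ofReal
          (if 0 ≤ x then 2 * (1 - F₀ x) * fmix x + f₀ x * ξ x
           else 2 * F₀ x * fmix x + f₀ x * ξ (-x)) :=
  filtered_sample_density_mixture_general P pi hpi f₀ f₁ hf₀nn hf₁nn hf₀int hf₁int hf₀symm F₀ F₁ hF₀
    hF₁ fmix hfmix T T0 hTmeas hT0meas hindep hTlaw hT0law Ttilde hTtilde ξ hξ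
end

section
/- Density of the filtered sample in the i.i.d. symmetric case (equation A.1, first identity). Let f₀ be a probability density on ℝ symmetric about zero (f₀(−x) = f₀(x)), with cumulative distribution function F₀(x) = ∫_{−∞}^x f₀(u) du. Let T and T⁰ be independent real random variables, each with density f₀, and define T̃⁰ = T if |T| ≤ |T⁰| and T̃⁰ = T⁰ otherwise. Then T̃⁰ has Lebesgue density f̃₀ given for almost every x ∈ ℝ by f̃₀(x) = 4 f₀(x) ( 1 − F₀(|x|) ). -/
open MeasureTheory ProbabilityTheory
open scoped Classical

/-- **Density of the filtered sample in the i.i.d. symmetric case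
(equation A.1, first identity).**
If `T` and `T⁰` are independent, each with a density `f₀` symmetric about zero, and
`T̃⁰ = T` when `|T| ≤ |T⁰|` and `T̃⁰ = T⁰` otherwise, then `T̃⁰` has Lebesgue density
`f̃₀(x) = 4 f₀(x) (1 − F₀(|x|))`. -/
theorem filtered_sample_density_iid_symmetric
    {Ω : Type*} [MeasurableSpace Ω] (P : Measure Ω) [IsProbabilityMeasure P]
    (f₀ : ℝ → ℝ) (hf₀meas : Measurable f₀) (hf₀nn : ∀ x, 0 ≤ f₀ x)
    (hf₀int : ∫ x, f₀ x = 1) (hf₀symm : ∀ x, f₀ (-x) = f₀ x)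
    (F₀ : ℝ → ℝ) (hF₀ : ∀ x, F₀ x = ∫ u in Set.Iic x, f₀ u)
    (T T0 : Ω → ℝ) (hTmeas : Measurable T) (hT0meas : Measurable T0)
    (hindep : IndepFun T T0 P)
    (hTlaw : Measure.map T P
      = (volume : Measure ℝ).withDensity fun x => ENNReal.ofReal (f₀ x))
    (hT0law : Measure.map T0 P
      = (volume : Measure ℝ).withDensity fun x => ENNReal.ofReal (f₀ x))
    (Ttilde : Ω → ℝ)
    (hTtilde : ∀ ω, Ttilde ω = if |T ω| ≤ |T0 ω| then T ω else T0 ω) :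
    Measure.map Ttilde P
      = (volume : Measure ℝ).withDensity fun x =>
          ENNReal.ofReal (4 * f₀ x * (1 - F₀ |x|)) := by
  classical
  set w : ℝ → ENNReal := fun x => ENNReal.ofReal (f₀ x) with hw
  have hwmeas : Measurable w := hf₀meas.ennreal_ofReal
  set μ : Measure ℝ := volume.withDensity w with hμdef
  -- f₀ is integrable
  have hint : Integrable f₀ := by
    by_contra h
    rw [integral_undef h] at hf₀int
    norm_num at hf₀int
  -- value of μ on measurable sets
  have hμapp : ∀ {A : Set ℝ}, MeasurableSet A → μ A = ENNReal.ofReal (∫ u in A, f₀ u) := by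
    intro A hA
    rw [hμdef, withDensity_apply _ hA,
      ← ofReal_integral_eq_lintegral_ofReal hint.integrableOn
        (Filter.Eventually.of_forall fun x => hf₀nn x)]
  have hprob : IsProbabilityMeasure μ := ⟨by
    rw [hμapp MeasurableSet.univ, Measure.restrict_univ, hf₀int, ENNReal.ofReal_one]⟩
  have hac : μ ≪ (volume : Measure ℝ) := withDensity_absolutelyContinuous _ _
  have hμsingleton : ∀ c : ℝ, μ {c} = 0 := fun c => hac (measure_singleton c)
  -- computations with F₀
  have hIoi : ∀ c : ℝ, ∫ u in Set.Ioi c, f₀ u = 1 - F₀ c := by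
    intro c
    have h := intervalIntegral.integral_Iic_add_Ioi (b := c) (f := f₀) (μ := volume)
      hint.integrableOn hint.integrableOn
    rw [hf₀int, ← hF₀] at h
    linarith
  have hF₀le : ∀ c : ℝ, F₀ c ≤ 1 := by
    intro c
    have h2 : 0 ≤ ∫ u in Set.Ioi c, f₀ u :=
      setIntegral_nonneg measurableSet_Ioi fun x _ => hf₀nn x
    have := hIoi c
    linarith
  have hFneg : ∀ c : ℝ, F₀ (-c) = 1 - F₀ c := by
    intro c
    have h1 : ∫ x in Set.Iic (-c), f₀ x = ∫ x in Set.Iic (-c), f₀ (-x) := by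
      simp only [hf₀symm]
    rw [hF₀, h1, integral_comp_neg_Iic, neg_neg, hIoi]
  -- measure of two-sided tails
  have htail : ∀ c : ℝ, 0 ≤ c →
      μ (Set.Iic (-c) ∪ Set.Ioi c) = ENNReal.ofReal (2 * (1 - F₀ c)) := by
    intro c hc
    have hdisj : Disjoint (Set.Iic (-c)) (Set.Ioi c) := by
      rw [Set.disjoint_left]
      intro x hx hx'
      simp only [Set.mem_Iic] at hx
      simp only [Set.mem_Ioi] at hx'
      linarith
    rw [measure_union hdisj measurableSet_Ioi, hμapp measurableSet_Iic,
      hμapp measurableSet_Ioi, ← hF₀, hFneg, hIoi,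
      ← ENNReal.ofReal_add (by linarith [hF₀le c]) (by linarith [hF₀le c])]
    ring_nf
  have hunion_sing : ∀ (A : Set ℝ) (c : ℝ), μ (A ∪ {c}) = μ A := by
    intro A c
    refine le_antisymm ?_ (measure_mono Set.subset_union_left)
    calc μ (A ∪ {c}) ≤ μ A + μ {c} := measure_union_le _ _
    _ = μ A := by rw [hμsingleton, add_zero]
  have hFabs : ∀ c : ℝ, 0 ≤ 1 - F₀ |c| := fun c => by linarith [hF₀le |c|]
  -- slice measures
  have hA1 : ∀ a : ℝ, μ {b : ℝ | |a| ≤ |b|} = ENNReal.ofReal (2 * (1 - F₀ |a|)) := by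
    intro a
    have hset : {b : ℝ | |a| ≤ |b|} = (Set.Iic (-|a|) ∪ Set.Ioi |a|) ∪ {|a|} := by
      ext x
      simp only [Set.mem_setOf_eq, Set.mem_union, Set.mem_Iic, Set.mem_Ioi,
        Set.mem_singleton_iff, le_abs]
      constructor
      · rintro (h | h)
        · rcases lt_or_eq_of_le h with h' | h'
          · exact Or.inl (Or.inr h')
          · exact Or.inr h'.symm
        · exact Or.inl (Or.inl (by linarith))
      · rintro ((h | h) | h)
        · exact Or.inr (by linarith)
        · exact Or.inl (le_of_lt h)
        · exact Or.inl (le_of_eq h.symm)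
    rw [hset, hunion_sing, htail _ (abs_nonneg a)]
  have hA2 : ∀ b : ℝ, μ {a : ℝ | |b| < |a|} = ENNReal.ofReal (2 * (1 - F₀ |b|)) := by
    intro b
    have hset : {a : ℝ | |b| < |a|} = Set.Iio (-|b|) ∪ Set.Ioi |b| := by
      ext x
      simp only [Set.mem_setOf_eq, Set.mem_union, Set.mem_Iio, Set.mem_Ioi, lt_abs]
      constructor
      · rintro (h | h)
        · exact Or.inr h
        · exact Or.inl (by linarith)
      · rintro (h | h)
        · exact Or.inr (by linarith)
        · exact Or.inl h
    have hset2 : Set.Iic (-|b|) ∪ Set.Ioi |b| = (Set.Iio (-|b|) ∪ Set.Ioi |b|) ∪ {-|b|} := by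
      ext x
      simp only [Set.mem_union, Set.mem_Iic, Set.mem_Iio, Set.mem_Ioi,
        Set.mem_singleton_iff]
      constructor
      · rintro (h | h)
        · rcases lt_or_eq_of_le h with h' | h'
          · exact Or.inl (Or.inl h')
          · exact Or.inr h'
        · exact Or.inl (Or.inr h)
      · rintro ((h | h) | h)
        · exact Or.inl (le_of_lt h)
        · exact Or.inr h
        · exact Or.inl (le_of_eq h)
    have := htail |b| (abs_nonneg b)
    rw [hset2, hunion_sing] at this
    rw [hset, this]
  -- measurability of F₀
  have hF₀mono : Monotone F₀ := by
    intro a b hab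
    rw [hF₀, hF₀]
    exact setIntegral_mono_set hint.integrableOn
      (Filter.Eventually.of_forall fun x => hf₀nn x)
      (HasSubset.Subset.eventuallyLE (Set.Iic_subset_Iic.mpr hab))
  have hF₀meas : Measurable F₀ := hF₀mono.measurable
  have hHmeas : Measurable fun x : ℝ => ENNReal.ofReal (2 * (1 - F₀ |x|)) :=
    (((measurable_const.sub (hF₀meas.comp measurable_abs)).const_mul 2)).ennreal_ofReal
  -- the combining function
  set g : ℝ × ℝ → ℝ := fun p => if |p.1| ≤ |p.2| then p.1 else p.2 with hg
  have hAset : MeasurableSet {p : ℝ × ℝ | |p.1| ≤ |p.2|} :=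
    measurableSet_le (measurable_fst.abs) (measurable_snd.abs)
  have hgmeas : Measurable g := Measurable.ite hAset measurable_fst measurable_snd
  -- joint law
  have hpair : Measure.map (fun ω => (T ω, T0 ω)) P = μ.prod μ := by
    have h := (indepFun_iff_map_prod_eq_prod_map_map hTmeas.aemeasurable
      hT0meas.aemeasurable).mp hindep
    rw [hTlaw, hT0law] at h
    exact h
  have hcomp : Ttilde = g ∘ (fun ω => (T ω, T0 ω)) := funext fun ω => hTtilde ω
  have hmap : Measure.map Ttilde P = Measure.map g (μ.prod μ) := by
    rw [hcomp, ← Measure.map_map hgmeas (hTmeas.prodMk hT0meas), hpair]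
  rw [hmap]
  refine Measure.ext fun s hs => ?_
  rw [Measure.map_apply hgmeas hs, withDensity_apply _ hs]
  -- decompose the preimage
  set S1 : Set (ℝ × ℝ) := {p : ℝ × ℝ | |p.1| ≤ |p.2|} ∩ (Prod.fst ⁻¹' s) with hS1
  set S2 : Set (ℝ × ℝ) := {p : ℝ × ℝ | |p.1| ≤ |p.2|}ᶜ ∩ (Prod.snd ⁻¹' s) with hS2
  have hS1meas : MeasurableSet S1 := hAset.inter (measurable_fst hs)
  have hS2meas : MeasurableSet S2 := hAset.compl.inter (measurable_snd hs)
  have hpre : g ⁻¹' s = S1 ∪ S2 := by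
    ext p
    by_cases h : |p.1| ≤ |p.2| <;>
      simp [hS1, hS2, hg, Set.mem_preimage, h]
  have hdisj : Disjoint S1 S2 := by
    rw [Set.disjoint_left]
    rintro p ⟨hp, -⟩ ⟨hp', -⟩
    exact hp' hp
  rw [hpre, measure_union hdisj hS2meas]
  -- compute each piece
  have hpiece1 : (μ.prod μ) S1 = ∫⁻ x in s, ENNReal.ofReal (2 * (1 - F₀ |x|)) ∂μ := by
    rw [Measure.prod_apply hS1meas]
    have hslice : ∀ a : ℝ,
        μ (Prod.mk a ⁻¹' S1) = s.indicator (fun x => ENNReal.ofReal (2 * (1 - F₀ |x|))) a := by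
      intro a
      by_cases ha : a ∈ s
      · have : Prod.mk a ⁻¹' S1 = {b : ℝ | |a| ≤ |b|} := by
          ext b; simp [hS1, Set.mem_preimage, ha]
        rw [this, hA1, Set.indicator_of_mem ha]
      · have : Prod.mk a ⁻¹' S1 = ∅ := by
          ext b; simp [hS1, Set.mem_preimage, ha]
        rw [this, measure_empty, Set.indicator_of_notMem ha]
    simp_rw [hslice]
    rw [lintegral_indicator hs]
  have hpiece2 : (μ.prod μ) S2 = ∫⁻ x in s, ENNReal.ofReal (2 * (1 - F₀ |x|)) ∂μ := by
    rw [Measure.prod_apply_symm hS2meas]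
    have hslice : ∀ b : ℝ,
        μ ((fun a => (a, b)) ⁻¹' S2)
          = s.indicator (fun x => ENNReal.ofReal (2 * (1 - F₀ |x|))) b := by
      intro b
      by_cases hb : b ∈ s
      · have : (fun a => (a, b)) ⁻¹' S2 = {a : ℝ | |b| < |a|} := by
          ext a
          simp [hS2, Set.mem_preimage, hb, not_le]
        rw [this, hA2, Set.indicator_of_mem hb]
      · have : (fun a => (a, b)) ⁻¹' S2 = ∅ := by
          ext a; simp [hS2, Set.mem_preimage, hb]
        rw [this, measure_empty, Set.indicator_of_notMem hb]
    simp_rw [hslice]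
    rw [lintegral_indicator hs]
  rw [hpiece1, hpiece2]
  -- rewrite the integral over μ as an integral over volume
  have hrestr : μ.restrict s = (volume.restrict s).withDensity w := by
    rw [hμdef, restrict_withDensity hs]
  rw [hrestr,
    lintegral_withDensity_eq_lintegral_mul _ hwmeas hHmeas,
    ← lintegral_add_left (by exact (hwmeas.mul hHmeas) : Measurable fun x => (w * fun x => ENNReal.ofReal (2 * (1 - F₀ |x|))) x)]
  refine lintegral_congr fun x => ?_
  simp only [Pi.mul_apply, hw]
  rw [← ENNReal.ofReal_mul (hf₀nn x), ← ENNReal.ofReal_add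
    (mul_nonneg (hf₀nn x) (by linarith [hFabs x])) (mul_nonneg (hf₀nn x) (by linarith [hFabs x]))]
  congr 1
  ring
end

section
/- Sign-flip joint distributional equality for a single unit (core claim (V, V⁰, S) ≐ (V⁰, V, S) in the proof of Theorem 1). Let n ≥ 4 and let ε_1,…,ε_n be i.i.d. real random variables whose common law μ is symmetric about zero, i.e., the pushforward of μ under x ↦ −x equals μ. Partition [n] into disjoint sets N₁ of size n₁ = ⌈n/2⌉ and N₂ of size n₂ = n − n₁; let ε̄₁, ε̄₂ be the sample means and S²₁, S²₂ the sample variances of {ε_j : j ∈ N₁} and {ε_j : j ∈ N₂}. Define V = ε̄₁ + ε̄₂, V⁰ = ε̄₁ − ε̄₂, and S = √( (n/(n₁ n₂)) · ((n₁−1)S²₁ + (n₂−1)S²₂)/(n−2) ). Then the triples (V, V⁰, S) and (V⁰, V, S) have the same joint distribution on ℝ³; in particular, (V/S, V⁰/S) and (V⁰/S, V/S) are equal in distribution. -/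
open MeasureTheory ProbabilityTheory
open scoped Classical

/-- Sample mean of the values `x j`, `j ∈ s`. -/
noncomputable def sampleMean {ι : Type*} (s : Finset ι) (x : ι → ℝ) : ℝ :=
  (∑ j ∈ s, x j) / s.card

/-- Sample variance of the values `x j`, `j ∈ s`. -/
noncomputable def sampleVar {ι : Type*} (s : Finset ι) (x : ι → ℝ) : ℝ :=
  (∑ j ∈ s, (x j - sampleMean s x) ^ 2) / (s.card - 1)

lemma sampleMean_congr {ι : Type*} {s : Finset ι} {x y : ι → ℝ}
    (h : ∀ j ∈ s, x j = y j) : sampleMean s x = sampleMean s y := by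
  unfold sampleMean; rw [Finset.sum_congr rfl h]

lemma sampleVar_congr {ι : Type*} {s : Finset ι} {x y : ι → ℝ}
    (h : ∀ j ∈ s, x j = y j) : sampleVar s x = sampleVar s y := by
  unfold sampleVar
  rw [sampleMean_congr h, Finset.sum_congr rfl (fun j hj => by rw [h j hj])]

lemma sampleMean_neg {ι : Type*} {s : Finset ι} {x y : ι → ℝ}
    (h : ∀ j ∈ s, x j = - y j) : sampleMean s x = - sampleMean s y := by
  unfold sampleMean
  rw [Finset.sum_congr rfl h, Finset.sum_neg_distrib, neg_div]

lemma sampleVar_neg {ι : Type*} {s : Finset ι} {x y : ι → ℝ}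
    (h : ∀ j ∈ s, x j = - y j) : sampleVar s x = sampleVar s y := by
  unfold sampleVar
  rw [sampleMean_neg h]
  congr 1
  refine Finset.sum_congr rfl (fun j hj => ?_)
  rw [h j hj]
  ring

lemma measurable_sampleMean {ι : Type*} [Fintype ι] (s : Finset ι) :
    Measurable (fun x : ι → ℝ => sampleMean s x) := by
  unfold sampleMean
  exact (Finset.measurable_sum s (fun j _ => measurable_pi_apply j)).div_const _

lemma measurable_sampleVar {ι : Type*} [Fintype ι] (s : Finset ι) :
    Measurable (fun x : ι → ℝ => sampleVar s x) := by
  unfold sampleVar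
  refine Measurable.div_const ?_ _
  exact Finset.measurable_sum s (fun j _ =>
    ((measurable_pi_apply j).sub (measurable_sampleMean s)).pow_const 2)

/-- **Sign-flip joint distributional equality for a single unit
(core claim `(V, V⁰, S) ≐ (V⁰, V, S)` in the proof of Theorem 1).**
If `ε 1, …, ε n` (`n ≥ 4`) are i.i.d. with a law symmetric about zero, then with
`V = ε̄₁ + ε̄₂`, `V⁰ = ε̄₁ − ε̄₂` and `S` the pooled standardization factor, the triples
`(V, V0, S)` and `(V⁰, V, S)` are equal in distribution; in particular
`(V/S, V⁰/S)` and `(V⁰/S, V/S)` are equal in distribution. -/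
theorem signflip_joint_distributional_equality
    {Ω : Type*} [MeasurableSpace Ω] (P : Measure Ω) [IsProbabilityMeasure P]
    (n : ℕ) (hn : 4 ≤ n)
    (ε : Fin n → Ω → ℝ) (hεmeas : ∀ j, Measurable (ε j))
    (ν : Measure ℝ) [IsProbabilityMeasure ν]
    -- the common law ν is symmetric about zero
    (hsymm : Measure.map (fun x : ℝ => -x) ν = ν)
    -- ε 1, …, ε n are i.i.d. with law ν
    (hiid : Measure.map (fun ω => fun j => ε j ω) P = Measure.pi fun _ : Fin n => ν)
    (N₁ N₂ : Finset (Fin n))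
    (hdisj : Disjoint N₁ N₂) (hunion : N₁ ∪ N₂ = Finset.univ)
    (hcard : N₁.card = (n + 1) / 2)
    (V V0 S : Ω → ℝ)
    (hV : ∀ ω, V ω = sampleMean N₁ (fun j => ε j ω) + sampleMean N₂ (fun j => ε j ω))
    (hV0 : ∀ ω, V0 ω = sampleMean N₁ (fun j => ε j ω) - sampleMean N₂ (fun j => ε j ω))
    (hS : ∀ ω, S ω = Real.sqrt
      (((n : ℝ) / ((N₁.card : ℝ) * (N₂.card : ℝ))) *
        ((((N₁.card : ℝ) - 1) * sampleVar N₁ (fun j => ε j ω) +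
          ((N₂.card : ℝ) - 1) * sampleVar N₂ (fun j => ε j ω)) / ((n : ℝ) - 2)))) :
    Measure.map (fun ω => (V ω, V0 ω, S ω)) P
      = Measure.map (fun ω => (V0 ω, V ω, S ω)) P ∧
    Measure.map (fun ω => (V ω / S ω, V0 ω / S ω)) P
      = Measure.map (fun ω => (V0 ω / S ω, V ω / S ω)) P := by
  -- setup
  set e : Ω → (Fin n → ℝ) := fun ω j => ε j ω with he
  have hemeas : Measurable e := measurable_pi_lambda _ hεmeas
  set Sfun : (Fin n → ℝ) → ℝ := fun x => Real.sqrt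
      (((n : ℝ) / ((N₁.card : ℝ) * (N₂.card : ℝ))) *
        ((((N₁.card : ℝ) - 1) * sampleVar N₁ x +
          ((N₂.card : ℝ) - 1) * sampleVar N₂ x) / ((n : ℝ) - 2))) with hSfun
  have hSfunMeas : Measurable Sfun := by
    apply Measurable.sqrt
    apply Measurable.const_mul
    apply Measurable.div_const
    exact ((measurable_sampleVar N₁).const_mul _).add
      ((measurable_sampleVar N₂).const_mul _)
  set F : (Fin n → ℝ) → ℝ × ℝ × ℝ := fun x =>
    (sampleMean N₁ x + sampleMean N₂ x, sampleMean N₁ x - sampleMean N₂ x, Sfun x) with hF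
  set G : (Fin n → ℝ) → ℝ × ℝ × ℝ := fun x =>
    (sampleMean N₁ x - sampleMean N₂ x, sampleMean N₁ x + sampleMean N₂ x, Sfun x) with hG
  have hFmeas : Measurable F :=
    ((measurable_sampleMean N₁).add (measurable_sampleMean N₂)).prod
      (((measurable_sampleMean N₁).sub (measurable_sampleMean N₂)).prod hSfunMeas)
  have hGmeas : Measurable G :=
    ((measurable_sampleMean N₁).sub (measurable_sampleMean N₂)).prod
      (((measurable_sampleMean N₁).add (measurable_sampleMean N₂)).prod hSfunMeas)
  -- the sign flip
  set T : (Fin n → ℝ) → (Fin n → ℝ) := fun x j => if j ∈ N₂ then -x j else x j with hT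
  have hTpres : MeasurePreserving T (Measure.pi fun _ : Fin n => ν)
      (Measure.pi fun _ : Fin n => ν) := by
    have := measurePreserving_pi (fun _ : Fin n => ν) (fun _ : Fin n => ν)
      (f := fun j t => if j ∈ N₂ then -t else t) (fun j => ?_)
    · exact this
    · by_cases hj : j ∈ N₂
      · simp only [hj, if_true]
        exact ⟨measurable_neg, hsymm⟩
      · simp only [hj, if_false]
        exact MeasurePreserving.id ν
  have hGFT : ∀ x, G x = F (T x) := by
    intro x
    have h1 : ∀ j ∈ N₁, T x j = x j := by
      intro j hj
      have : j ∉ N₂ := fun h => (Finset.disjoint_left.mp hdisj hj) h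
      simp [hT, this]
    have h2 : ∀ j ∈ N₂, T x j = - x j := by
      intro j hj; simp [hT, hj]
    have hm1 : sampleMean N₁ (T x) = sampleMean N₁ x := sampleMean_congr h1
    have hm2 : sampleMean N₂ (T x) = - sampleMean N₂ x := sampleMean_neg h2
    have hv1 : sampleVar N₁ (T x) = sampleVar N₁ x := sampleVar_congr h1
    have hv2 : sampleVar N₂ (T x) = sampleVar N₂ x := sampleVar_neg h2
    simp only [hF, hG, hSfun, hm1, hm2, hv1, hv2]
    refine Prod.ext (by ring) (Prod.ext (by ring) rfl)
  -- identify the two triples as F ∘ e and G ∘ e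
  have hFe : (fun ω => (V ω, V0 ω, S ω)) = F ∘ e := by
    funext ω
    simp only [Function.comp_apply, hF, hV ω, hV0 ω, hS ω, he, hSfun]
  have hGe : (fun ω => (V0 ω, V ω, S ω)) = G ∘ e := by
    funext ω
    simp only [Function.comp_apply, hG, hV ω, hV0 ω, hS ω, he, hSfun]
  have key : Measure.map (fun ω => (V ω, V0 ω, S ω)) P
      = Measure.map (fun ω => (V0 ω, V ω, S ω)) P := by
    rw [hFe, hGe, ← Measure.map_map hFmeas hemeas, ← Measure.map_map hGmeas hemeas, hiid]
    have hGFT' : G = F ∘ T := funext hGFT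
    rw [hGFT', ← Measure.map_map hFmeas hTpres.measurable, hTpres.map_eq]
  refine ⟨key, ?_⟩
  -- second statement via pushforward under (a,b,s) ↦ (a/s, b/s)
  set h : ℝ × ℝ × ℝ → ℝ × ℝ := fun p => (p.1 / p.2.2, p.2.1 / p.2.2) with hh
  have hhmeas : Measurable h :=
    (measurable_fst.div (measurable_snd.comp measurable_snd)).prod
      ((measurable_fst.comp measurable_snd).div (measurable_snd.comp measurable_snd))
  have htriple1 : Measurable (fun ω => (V ω, V0 ω, S ω)) := by
    rw [hFe]; exact hFmeas.comp hemeas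
  have htriple2 : Measurable (fun ω => (V0 ω, V ω, S ω)) := by
    rw [hGe]; exact hGmeas.comp hemeas
  have e1 : (fun ω => (V ω / S ω, V0 ω / S ω))
      = h ∘ (fun ω => (V ω, V0 ω, S ω)) := rfl
  have e2 : (fun ω => (V0 ω / S ω, V ω / S ω))
      = h ∘ (fun ω => (V0 ω, V ω, S ω)) := rfl
  rw [e1, e2, ← Measure.map_map hhmeas htriple1, ← Measure.map_map hhmeas htriple2, key]
end
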